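/- arXiv:1711.00394 — 10 statements merged into one kernel-verified Lean document; each statement's English description precedes it below -/
import Mathlib

section
/- Let ν ∈ [0,1], L_ν > 0 and δ > 0. Suppose f : H → ℝ is Fréchet differentiable and ‖∇f(y) − ∇f(x)‖ ≤ L_ν·‖y − x‖^ν for all x, y ∈ H. Set L = L_ν · ( ((1−ν)/(1+ν)) · (L_ν/(2δ)) )^((1−ν)/(1+ν)). Then for all x, y ∈ H: f(y) ≤ f(x) + ⟨∇f(x), y − x⟩ + (L/2)·‖y − x‖² + δ. (This is inequality (2.3) with constant (2.5): a ν-Hölder gradient yields a (δ, L)-inexactly smooth bound for every accuracy δ > 0.) -/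
open RealInnerProductSpace

private lemma descent_step
    {H : Type*} [NormedAddCommGroup H] [InnerProductSpace ℝ H] [CompleteSpace H]
    (f : H → ℝ) (f' : H → H) (hf : ∀ x, HasGradientAt f (f' x) x)
    (ν Lν : ℝ) (hν0 : 0 ≤ ν) (hL : 0 < Lν)
    (hHolder : ∀ x y : H, ‖f' y - f' x‖ ≤ Lν * ‖y - x‖ ^ ν)
    (x y : H) :
    f y ≤ f x + ⟪f' x, y - x⟫ + Lν / (1 + ν) * ‖y - x‖ ^ (1 + ν) := by
  have h1ν : (0:ℝ) < 1 + ν := by linarith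
  rcases eq_or_ne y x with rfl | hxy
  · have h0 : ‖y - y‖ ^ (1 + ν) = 0 := by
      simp [Real.zero_rpow (ne_of_gt h1ν)]
    simp [h0]
    positivity
  set d := y - x with hd
  have hdn : (0:ℝ) < ‖d‖ := by
    simpa [hd] using norm_sub_pos_iff.mpr hxy
  set g : ℝ → ℝ := fun t => f (x + t • d) with hg_def
  have hg : ∀ t : ℝ, HasDerivAt g ⟪f' (x + t • d), d⟫ t := by
    intro t
    have hc : HasDerivAt (fun t : ℝ => x + t • d) d t := by
      simpa using ((hasDerivAt_id t).smul_const d).const_add x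
    have := (hf (x + t • d)).hasFDerivAt.comp_hasDerivAt t hc
    simpa [InnerProductSpace.toDual_apply_apply, Function.comp_def] using this
  set K : ℝ := Lν * ‖d‖ ^ (1 + ν) / (1 + ν) with hK
  set φ : ℝ → ℝ := fun t => g t - g 0 - t * ⟪f' x, d⟫ - K * t ^ (1 + ν) with hφ
  have hgd : Differentiable ℝ g := fun t => (hg t).differentiableAt
  have hφc : ContinuousOn φ (Set.Icc 0 1) := by
    apply ContinuousOn.sub
    · apply ContinuousOn.sub
      · exact (hgd.continuous.sub continuous_const).continuousOn
      · exact (continuous_id.mul continuous_const).continuousOn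
    · exact (continuous_const.mul
        (Real.continuous_rpow_const (le_of_lt h1ν))).continuousOn
  have hφ' : ∀ t ∈ Set.Ioo (0:ℝ) 1, HasDerivAt φ
      (⟪f' (x + t • d), d⟫ - ⟪f' x, d⟫ - K * ((1 + ν) * t ^ ν)) t := by
    intro t ht
    have h2 : HasDerivAt (fun s : ℝ => s ^ (1 + ν)) ((1 + ν) * t ^ (1 + ν - 1)) t :=
      Real.hasDerivAt_rpow_const (Or.inl (ne_of_gt ht.1))
    rw [show (1 + ν - 1) = ν by ring] at h2
    have h3 : HasDerivAt (fun s : ℝ => s * ⟪f' x, d⟫) ⟪f' x, d⟫ t := by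
      simpa using (hasDerivAt_id t).mul_const (⟪f' x, d⟫ : ℝ)
    exact (((hg t).sub_const (g 0)).sub h3).sub (h2.const_mul K)
  have hφ'le : ∀ t ∈ Set.Ioo (0:ℝ) 1,
      ⟪f' (x + t • d), d⟫ - ⟪f' x, d⟫ - K * ((1 + ν) * t ^ ν) ≤ 0 := by
    intro t ht
    have key : ⟪f' (x + t • d), d⟫ - ⟪f' x, d⟫ ≤ Lν * ‖d‖ ^ (1 + ν) * t ^ ν := by
      calc ⟪f' (x + t • d), d⟫ - ⟪f' x, d⟫ = ⟪f' (x + t • d) - f' x, d⟫ := by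
            rw [inner_sub_left]
        _ ≤ ‖f' (x + t • d) - f' x‖ * ‖d‖ := real_inner_le_norm _ _
        _ ≤ (Lν * ‖(x + t • d) - x‖ ^ ν) * ‖d‖ :=
            mul_le_mul_of_nonneg_right (hHolder x (x + t • d)) (norm_nonneg d)
        _ = Lν * ‖d‖ ^ (1 + ν) * t ^ ν := by
            have h1 : ‖(x + t • d) - x‖ = t * ‖d‖ := by
              rw [add_sub_cancel_left, norm_smul, Real.norm_eq_abs,
                abs_of_pos ht.1]
            rw [h1, Real.mul_rpow (le_of_lt ht.1) (norm_nonneg d)]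
            rw [show (1 + ν) = ν + 1 by ring, Real.rpow_add_one (ne_of_gt hdn)]
            ring
    have hKν : K * (1 + ν) = Lν * ‖d‖ ^ (1 + ν) := by
      rw [hK, div_mul_cancel₀ _ (ne_of_gt h1ν)]
    have hKt : K * ((1 + ν) * t ^ ν) = Lν * ‖d‖ ^ (1 + ν) * t ^ ν := by
      rw [← mul_assoc, hKν]
    linarith
  have hanti : AntitoneOn φ (Set.Icc 0 1) := by
    apply antitoneOn_of_deriv_nonpos (convex_Icc 0 1) hφc
    · rw [interior_Icc]
      exact fun t ht => ((hφ' t ht).differentiableAt).differentiableWithinAt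
    · rw [interior_Icc]
      intro t ht
      rw [(hφ' t ht).deriv]
      exact hφ'le t ht
  have h01 : φ 1 ≤ φ 0 :=
    hanti (Set.mem_Icc.mpr ⟨le_refl 0, zero_le_one⟩)
      (Set.mem_Icc.mpr ⟨zero_le_one, le_refl 1⟩) zero_le_one
  have hφ0 : φ 0 = 0 := by
    simp [hφ, Real.zero_rpow (ne_of_gt h1ν)]
  have hg1 : g 1 = f y := by simp [hg_def, hd]
  have hg0 : g 0 = f x := by simp [hg_def]
  have hφ1 : φ 1 = f y - f x - ⟪f' x, d⟫ - K := by
    simp [hφ, hg1, hg0, Real.one_rpow]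
  rw [hφ0, hφ1] at h01
  have hKeq : K = Lν / (1 + ν) * ‖d‖ ^ (1 + ν) := by rw [hK]; ring
  rw [hKeq] at h01
  linarith

private lemma young_step (ν Lν δ t : ℝ) (hν0 : 0 ≤ ν) (hν1 : ν ≤ 1)
    (hL : 0 < Lν) (hδ : 0 < δ) (ht : 0 ≤ t) :
    Lν / (1 + ν) * t ^ (1 + ν) ≤
      (Lν * (((1 - ν) / (1 + ν)) * (Lν / (2 * δ))) ^ ((1 - ν) / (1 + ν)) / 2) * t ^ 2 + δ := by
  have h1ν : (0:ℝ) < 1 + ν := by linarith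
  rcases eq_or_lt_of_le hν1 with rfl | hν1'
  · -- ν = 1
    have h2 : ((1:ℝ) - 1) / (1 + 1) = 0 := by norm_num
    rw [h2, Real.rpow_zero]
    have ht2 : t ^ ((1:ℝ) + 1) = t ^ 2 := by
      rw [show ((1:ℝ) + 1) = ((2:ℕ):ℝ) by norm_num, Real.rpow_natCast]
    rw [ht2]
    have : Lν / (1 + 1) * t ^ 2 = Lν * 1 / 2 * t ^ 2 := by ring
    linarith
  · -- ν < 1
    set θ : ℝ := (1 - ν) / (1 + ν) with hθ
    have hθ0 : 0 < θ := div_pos (by linarith) h1ν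
    set a : ℝ := Lν / (1 + ν) with ha
    have ha0 : 0 < a := div_pos hL h1ν
    set r : ℝ := 2 * δ / (1 - ν) with hr
    have hr0 : 0 < r := div_pos (by linarith) (by linarith)
    set c : ℝ := θ * (Lν / (2 * δ)) with hc
    have hc0 : 0 < c := mul_pos hθ0 (div_pos hL (by linarith))
    have h1mν : (1 - ν) ≠ 0 := ne_of_gt (by linarith)
    have h2δ : (2 * δ) ≠ 0 := by positivity
    have hcr : c * r = a := by
      rw [hc, hr, hθ, ha, div_mul_div_comm, div_mul_div_comm,
        div_eq_div_iff (mul_ne_zero (mul_ne_zero (ne_of_gt h1ν) h2δ) h1mν)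
          (ne_of_gt h1ν)]
      ring
    set w₁ : ℝ := (1 + ν) / 2 with hw₁
    set w₂ : ℝ := (1 - ν) / 2 with hw₂
    have hw₁0 : 0 < w₁ := by rw [hw₁]; linarith
    have hw₂0 : 0 < w₂ := by rw [hw₂]; linarith
    have hw : w₁ + w₂ = 1 := by rw [hw₁, hw₂]; ring
    set s : ℝ := a * c ^ θ with hs
    have hs0 : 0 < s := mul_pos ha0 (Real.rpow_pos_of_pos hc0 θ)
    have hkey : s ^ w₁ * r ^ w₂ = a := by
      have hθw : θ * w₁ = w₂ := by
        rw [hθ, hw₁, hw₂, div_mul_div_comm,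
          div_eq_div_iff (mul_ne_zero (ne_of_gt h1ν) two_ne_zero) two_ne_zero]
        ring
      have h1 : s ^ w₁ = a ^ w₁ * c ^ w₂ := by
        rw [hs, Real.mul_rpow ha0.le (Real.rpow_pos_of_pos hc0 θ).le,
          ← Real.rpow_mul hc0.le, hθw]
      rw [h1, mul_assoc, ← Real.mul_rpow hc0.le hr0.le, hcr,
        ← Real.rpow_add ha0, hw, Real.rpow_one]
    have ht2 : t ^ (1 + ν) = (t ^ 2) ^ w₁ := by
      rw [← Real.rpow_natCast t 2, ← Real.rpow_mul ht]
      congr 1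
      rw [hw₁]
      push_cast
      ring
    calc a * t ^ (1 + ν) = (s * t ^ 2) ^ w₁ * r ^ w₂ := by
          rw [Real.mul_rpow hs0.le (by positivity), ht2, ← hkey]
          ring
      _ ≤ w₁ * (s * t ^ 2) + w₂ * r :=
          Real.geom_mean_le_arith_mean2_weighted hw₁0.le hw₂0.le (by positivity) hr0.le hw
      _ = w₁ * s * t ^ 2 + w₂ * r := by ring
      _ = Lν * c ^ θ / 2 * t ^ 2 + δ := by
          have e1 : w₁ * s = Lν * c ^ θ / 2 := by
            rw [hw₁, hs, ha]
            field_simp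
          have e2 : w₂ * r = δ := by
            rw [hw₂, hr, div_mul_div_comm,
              div_eq_iff (mul_ne_zero two_ne_zero h1mν)]
            ring
          rw [e1, e2]

/-- A ν-Hölder continuous gradient yields, for every accuracy δ > 0, the inexact
smoothness bound (2.3) with the constant L from (2.5). -/
theorem holder_gradient_inexact_smoothness
    {H : Type*} [NormedAddCommGroup H] [InnerProductSpace ℝ H] [CompleteSpace H]
    (f : H → ℝ) (f' : H → H) (hf : ∀ x, HasGradientAt f (f' x) x)
    (ν Lν δ : ℝ) (hν0 : 0 ≤ ν) (hν1 : ν ≤ 1) (hL : 0 < Lν) (hδ : 0 < δ)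
    (hHolder : ∀ x y : H, ‖f' y - f' x‖ ≤ Lν * ‖y - x‖ ^ ν) :
    ∀ x y : H, f y ≤ f x + ⟪f' x, y - x⟫ +
      (Lν * (((1 - ν) / (1 + ν)) * (Lν / (2 * δ))) ^ ((1 - ν) / (1 + ν)) / 2) * ‖y - x‖ ^ 2
      + δ := by
  intro x y
  have h1 := descent_step f f' hf ν Lν hν0 hL hHolder x y
  have h2 := young_step ν Lν δ ‖y - x‖ hν0 hν1 hL hδ (norm_nonneg _)
  linarith
end

section
/- (Averaged-iterate rate (1.20).) Let f : H → ℝ be convex and Fréchet differentiable with L-Lipschitz gradient, L > 0, let x* be a global minimizer of f, R = ‖x⁰ − x*‖, and let (x^k) be the gradient descent iterates with step size 1/L from x⁰. Then for every N ≥ 1, the average x̄^N = (1/N)·Σ_{k=1}^{N} x^k satisfies f(x̄^N) − f(x*) ≤ L·R² / (2N). -/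
open RealInnerProductSpace

section Aux

variable {H : Type*} [NormedAddCommGroup H] [InnerProductSpace ℝ H] [CompleteSpace H]

/-- derivative of the 1D restriction -/
lemma hasDerivAt_comp_line (f : H → ℝ) (f' : H → H) (hf : ∀ x, HasGradientAt f (f' x) x)
    (a d : H) (t : ℝ) :
    HasDerivAt (fun s : ℝ => f (a + s • d)) ⟪f' (a + t • d), d⟫ t := by
  have hc : HasDerivAt (fun s : ℝ => a + s • d) d t := by
    simpa using ((hasDerivAt_id t).smul_const d).const_add a
  have hF : HasFDerivAt f (InnerProductSpace.toDual ℝ H (f' (a + t • d))) (a + t • d) := hf _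
  have := hF.comp_hasDerivAt t hc
  simp only [InnerProductSpace.toDual_apply_apply] at this
  exact this

/-- convexity gradient inequality -/
lemma convex_grad_ineq (f : H → ℝ) (f' : H → H) (hf : ∀ x, HasGradientAt f (f' x) x)
    (hconv : ConvexOn ℝ Set.univ f) (a b : H) :
    f a + ⟪f' a, b - a⟫ ≤ f b := by
  set φ : ℝ → ℝ := fun s => f (a + s • (b - a)) with hφ
  have hφc : ConvexOn ℝ Set.univ φ := by
    have := hconv.comp_affineMap (AffineMap.lineMap a b : ℝ →ᵃ[ℝ] H)
    have he : ∀ s : ℝ, (AffineMap.lineMap a b : ℝ →ᵃ[ℝ] H) s = a + s • (b - a) := by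
      intro s; simp [AffineMap.lineMap_apply]; abel
    refine ⟨convex_univ, ?_⟩
    intro p _ q _ u v hu hv huv
    have := this.2 (Set.mem_preimage.mpr (Set.mem_univ _)) (Set.mem_preimage.mpr (Set.mem_univ _))
      hu hv huv (x := p) (y := q)
    simpa [Function.comp, he] using this
  have hd : HasDerivAt φ ⟪f' a, b - a⟫ 0 := by
    simpa using hasDerivAt_comp_line f f' hf a (b - a) 0
  have := hφc.le_slope_of_hasDerivAt (Set.mem_univ (0:ℝ)) (Set.mem_univ (1:ℝ)) one_pos hd
  have hslope : slope φ 0 1 = f b - f a := by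
    simp [slope, φ]
  rw [hslope] at this
  linarith

/-- descent lemma -/
lemma descent_lemma (f : H → ℝ) (f' : H → H) (hf : ∀ x, HasGradientAt f (f' x) x)
    (L : ℝ) (hL : 0 < L) (hlip : ∀ x y : H, ‖f' y - f' x‖ ≤ L * ‖y - x‖) (a b : H) :
    f b ≤ f a + ⟪f' a, b - a⟫ + L / 2 * ‖b - a‖ ^ 2 := by
  set d := b - a with hd
  set χ : ℝ → ℝ := fun t => ⟪f' a, d⟫ * t + L / 2 * ‖d‖ ^ 2 * t ^ 2 - f (a + t • d) with hχ
  have hder : ∀ t : ℝ, HasDerivAt χ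
      (⟪f' a, d⟫ + L * ‖d‖ ^ 2 * t - ⟪f' (a + t • d), d⟫) t := by
    intro t
    have h1 : HasDerivAt (fun t : ℝ => ⟪f' a, d⟫ * t) ⟪f' a, d⟫ t := by
      simpa using (hasDerivAt_id t).const_mul ⟪f' a, d⟫
    have h2 : HasDerivAt (fun t : ℝ => L / 2 * ‖d‖ ^ 2 * t ^ 2)
        (L / 2 * ‖d‖ ^ 2 * (2 * t)) t := by
      simpa using ((hasDerivAt_pow 2 t)).const_mul (L / 2 * ‖d‖ ^ 2)
    have h3 := hasDerivAt_comp_line f f' hf a d t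
    have := (h1.add h2).sub h3
    exact this.congr_deriv (by ring)
  have hmono : MonotoneOn χ (Set.Icc (0:ℝ) 1) := by
    apply monotoneOn_of_hasDerivWithinAt_nonneg (convex_Icc 0 1)
      (Differentiable.continuous (fun t => (hder t).differentiableAt)).continuousOn
      (fun t ht => ((hder t).hasDerivWithinAt))
    · intro t ht
      rw [interior_Icc] at ht
      have hlb : ⟪f' (a + t • d) - f' a, d⟫ ≤ L * t * ‖d‖ ^ 2 := by
        calc ⟪f' (a + t • d) - f' a, d⟫ ≤ ‖f' (a + t • d) - f' a‖ * ‖d‖ :=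
              real_inner_le_norm _ _
          _ ≤ (L * ‖(a + t • d) - a‖) * ‖d‖ := by
              gcongr; exact hlip a (a + t • d)
          _ = L * (|t| * ‖d‖) * ‖d‖ := by rw [add_sub_cancel_left, norm_smul]; simp [Real.norm_eq_abs]
          _ = L * t * ‖d‖ ^ 2 := by rw [abs_of_pos ht.1]; ring
      have : ⟪f' (a + t • d), d⟫ - ⟪f' a, d⟫ ≤ L * t * ‖d‖ ^ 2 := by
        rw [← inner_sub_left]; exact hlb
      linarith
  have h01 := hmono (Set.mem_Icc.mpr ⟨le_refl 0, zero_le_one⟩)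
    (Set.mem_Icc.mpr ⟨zero_le_one, le_refl 1⟩) zero_le_one
  simp only [hχ] at h01
  simp only [zero_smul, add_zero, one_smul, mul_zero, mul_one, zero_pow, one_pow] at h01
  have hab : a + d = b := by rw [hd]; abel
  rw [hab] at h01
  linarith

end Aux


/-- Averaged-iterate rate (1.20): for gradient descent with step 1/L on a convex
L-smooth function, f(x̄^N) − f(x*) ≤ LR²/(2N) where x̄^N is the average of the
first N iterates. -/
theorem gradient_descent_average_rate
    {H : Type*} [NormedAddCommGroup H] [InnerProductSpace ℝ H] [CompleteSpace H]
    (f : H → ℝ) (f' : H → H) (hf : ∀ x, HasGradientAt f (f' x) x)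
    (hconv : ConvexOn ℝ Set.univ f)
    (L : ℝ) (hL : 0 < L)
    (hlip : ∀ x y : H, ‖f' y - f' x‖ ≤ L * ‖y - x‖)
    (xstar : H) (hmin : ∀ y : H, f xstar ≤ f y)
    (x : ℕ → H) (hstep : ∀ k : ℕ, x (k + 1) = x k - (1 / L) • f' (x k)) :
    ∀ N : ℕ, 1 ≤ N →
      f ((N : ℝ)⁻¹ • ∑ k ∈ Finset.Icc 1 N, x k) - f xstar ≤
        L * ‖x 0 - xstar‖ ^ 2 / (2 * N) := by
  intro N hN
  have key : ∀ k : ℕ, f (x (k + 1)) - f xstar ≤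
      L / 2 * (‖x k - xstar‖ ^ 2 - ‖x (k + 1) - xstar‖ ^ 2) := by
    intro k
    set a := x k with ha
    set g := f' (x k) with hg
    have hb : x (k + 1) = a - (1 / L) • g := hstep k
    have hdesc := descent_lemma f f' hf L hL hlip a (x (k + 1))
    have hcv := convex_grad_ineq f f' hf hconv a xstar
    have hba : x (k + 1) - a = -((1 / L) • g) := by rw [hb]; abel
    have h1 : ⟪f' a, x (k + 1) - a⟫ = -(1 / L) * ‖g‖ ^ 2 := by
      rw [← ha, ← hg] at *
      rw [hba, inner_neg_right, real_inner_smul_right, real_inner_self_eq_norm_sq]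
      ring
    have h2 : ‖x (k + 1) - a‖ ^ 2 = (1 / L) ^ 2 * ‖g‖ ^ 2 := by
      rw [hba, norm_neg, norm_smul, mul_pow]
      congr 1
      rw [Real.norm_eq_abs, abs_of_pos (by positivity), sq]
    have h3 : ‖x (k + 1) - xstar‖ ^ 2 =
        ‖a - xstar‖ ^ 2 - 2 * (1 / L) * ⟪g, a - xstar⟫ + (1 / L) ^ 2 * ‖g‖ ^ 2 := by
      have : x (k + 1) - xstar = (a - xstar) - (1 / L) • g := by rw [hb]; abel
      rw [this, norm_sub_sq_real, real_inner_smul_right, norm_smul, mul_pow,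
        real_inner_comm, Real.norm_eq_abs, abs_of_pos (by positivity : (0:ℝ) < 1 / L), sq (1/L)]
      ring
    have h4 : ⟪f' a, xstar - a⟫ = -⟪g, a - xstar⟫ := by
      rw [← hg, ← inner_neg_right]
      congr 1
      abel
    rw [h4] at hcv
    rw [← hg] at h1 hdesc
    rw [h1, h2] at hdesc
    rw [h3]
    have hq : L / 2 * ((1 / L) ^ 2 * ‖g‖ ^ 2) = 1 / L * ‖g‖ ^ 2 / 2 := by
      field_simp
    have hr : L / 2 * (‖a - xstar‖ ^ 2 - (‖a - xstar‖ ^ 2 -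
        2 * (1 / L) * ⟪g, a - xstar⟫ + (1 / L) ^ 2 * ‖g‖ ^ 2)) =
        ⟪g, a - xstar⟫ - 1 / L * ‖g‖ ^ 2 / 2 := by
      field_simp; ring
    rw [hr]
    linarith [hdesc, hcv, hq]
  have sum1 : ∑ k ∈ Finset.range N, (f (x (k + 1)) - f xstar) ≤
      L / 2 * ‖x 0 - xstar‖ ^ 2 := by
    have e1 : ∑ k ∈ Finset.range N, (f (x (k + 1)) - f xstar) ≤
        ∑ k ∈ Finset.range N, L / 2 * (‖x k - xstar‖ ^ 2 - ‖x (k + 1) - xstar‖ ^ 2) :=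
      Finset.sum_le_sum fun k _ => key k
    have e2 : ∑ k ∈ Finset.range N, L / 2 * (‖x k - xstar‖ ^ 2 - ‖x (k + 1) - xstar‖ ^ 2)
        = L / 2 * (‖x 0 - xstar‖ ^ 2 - ‖x N - xstar‖ ^ 2) := by
      rw [← Finset.mul_sum, Finset.sum_range_sub' (fun k => ‖x k - xstar‖ ^ 2)]
    have e3 : L / 2 * (‖x 0 - xstar‖ ^ 2 - ‖x N - xstar‖ ^ 2) ≤ L / 2 * ‖x 0 - xstar‖ ^ 2 := by
      have : (0:ℝ) ≤ ‖x N - xstar‖ ^ 2 := by positivity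
      nlinarith
    linarith
  have hN0 : (N : ℝ) ≠ 0 := by positivity
  have hcard : (Finset.Icc 1 N).card = N := by
    rw [Nat.card_Icc]; omega
  have hw : ∑ _k ∈ Finset.Icc 1 N, (N : ℝ)⁻¹ = 1 := by
    rw [Finset.sum_const, hcard, nsmul_eq_mul]
    field_simp
  have hjen := hconv.map_sum_le (t := Finset.Icc 1 N) (w := fun _ => (N : ℝ)⁻¹) (p := x)
    (fun i _ => by positivity) hw (fun i _ => Set.mem_univ _)
  have hsmul : (N : ℝ)⁻¹ • ∑ k ∈ Finset.Icc 1 N, x k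
      = ∑ k ∈ Finset.Icc 1 N, (N : ℝ)⁻¹ • x k := Finset.smul_sum
  have hsum_eq : ∑ k ∈ Finset.Icc 1 N, (f (x k) - f xstar)
      = ∑ k ∈ Finset.range N, (f (x (k + 1)) - f xstar) := by
    rw [← Finset.Ico_add_one_right_eq_Icc, Finset.sum_Ico_eq_sum_range]
    have hNN : N + 1 - 1 = N := by omega
    rw [hNN]
    exact Finset.sum_congr rfl fun k _ => by rw [add_comm]
  have hfin : ∑ k ∈ Finset.Icc 1 N, (N : ℝ)⁻¹ * f (x k)
      = (N : ℝ)⁻¹ * (∑ k ∈ Finset.Icc 1 N, (f (x k) - f xstar)) + f xstar := by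
    rw [Finset.sum_sub_distrib, Finset.sum_const, hcard, nsmul_eq_mul, ← Finset.mul_sum]
    field_simp
    ring
  rw [hsmul]
  have hbound : ∑ k ∈ Finset.Icc 1 N, (f (x k) - f xstar) ≤ L / 2 * ‖x 0 - xstar‖ ^ 2 := by
    rw [hsum_eq]; exact sum1
  have hNpos : (0:ℝ) < N := by positivity
  calc f (∑ k ∈ Finset.Icc 1 N, (N : ℝ)⁻¹ • x k) - f xstar
      ≤ ∑ k ∈ Finset.Icc 1 N, (N : ℝ)⁻¹ * f (x k) - f xstar := by
        have := hjen
        simp only [smul_eq_mul] at this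
        linarith
    _ = (N : ℝ)⁻¹ * (∑ k ∈ Finset.Icc 1 N, (f (x k) - f xstar)) := by rw [hfin]; ring
    _ ≤ (N : ℝ)⁻¹ * (L / 2 * ‖x 0 - xstar‖ ^ 2) := by
        apply mul_le_mul_of_nonneg_left hbound (by positivity)
    _ = L * ‖x 0 - xstar‖ ^ 2 / (2 * N) := by
        rw [eq_div_iff (by positivity : (2:ℝ) * (N:ℝ) ≠ 0)]
        field_simp
end

section
/- (Projected gradient method with inexact oracle, bound (2.22).) Let Q ⊆ H be a nonempty closed convex set, let f : H → ℝ be Fréchet differentiable and convex on Q, let L > 0 and δ ≥ 0, and assume the inexact smoothness condition: for all x, y ∈ Q, f(y) ≤ f(x) + ⟨∇f(x), y − x⟩ + (L/2)‖y − x‖² + δ. Let x* be a minimizer of f over Q, let x⁰ ∈ Q, and let (x^k) ⊆ Q be such that, for every k, x^{k+1} is a projected gradient step from x^k with step size 1/L on Q. Then for every N ≥ 1, the average x̄^N = (1/N)·Σ_{k=1}^{N} x^k satisfies f(x̄^N) − f(x*) ≤ L·‖x⁰ − x*‖² / (2N) + δ. -/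
open RealInnerProductSpace

lemma grad_convex_ineq
    {H : Type*} [NormedAddCommGroup H] [InnerProductSpace ℝ H] [CompleteSpace H]
    {Q : Set H} (hQconv : Convex ℝ Q)
    {f : H → ℝ} {f' : H → H} (hf : ∀ x, HasGradientAt f (f' x) x)
    (hfconv : ConvexOn ℝ Q f) {x u : H} (hx : x ∈ Q) (hu : u ∈ Q) :
    f x + ⟪f' x, u - x⟫ ≤ f u := by
  set A : ℝ →ᵃ[ℝ] H := AffineMap.lineMap x u with hA
  have hAt : ∀ t : ℝ, A t = x + t • (u - x) := by
    intro t; simp [hA, AffineMap.lineMap_apply, vsub_eq_sub, vadd_eq_add]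
    module
  have hmem : ∀ t ∈ Set.Icc (0:ℝ) 1, A t ∈ Q := by
    intro t ht
    rw [hAt]
    exact hQconv.add_smul_sub_mem hx hu ht
  have hgconv : ConvexOn ℝ (Set.Icc (0:ℝ) 1) (f ∘ A) :=
    (hfconv.comp_affineMap A).subset hmem (convex_Icc 0 1)
  have hline : HasDerivAt (fun t : ℝ => A t) (u - x) 0 := by
    simp only [hAt]
    simpa using ((hasDerivAt_id (0:ℝ)).smul_const (u - x)).const_add x
  have hA0 : A 0 = x := by rw [hAt]; simp
  have hd : HasDerivAt (f ∘ A) ⟪f' x, u - x⟫ 0 := by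
    have h1 := (hf x).hasFDerivAt
    rw [← hA0] at h1
    have := h1.comp_hasDerivAt 0 hline
    simpa [InnerProductSpace.toDual_apply_apply, hA0] using this
  have := hgconv.le_slope_of_hasDerivAt (by simp) (by norm_num : (1:ℝ) ∈ Set.Icc (0:ℝ) 1)
    one_pos hd
  have hs : slope (f ∘ A) 0 1 = f u - f x := by
    simp [slope_def_field, hA0, hAt, Function.comp]
  rw [hs] at this
  linarith

/-- Projected gradient method with a (δ, L) inexact oracle, bound (2.22):
f(x̄^N) − f(x*) ≤ L‖x⁰ − x*‖²/(2N) + δ. -/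
theorem projected_gradient_inexact_rate
    {H : Type*} [NormedAddCommGroup H] [InnerProductSpace ℝ H] [CompleteSpace H]
    (Q : Set H) (hQne : Q.Nonempty) (hQcl : IsClosed Q) (hQconv : Convex ℝ Q)
    (f : H → ℝ) (f' : H → H) (hf : ∀ x, HasGradientAt f (f' x) x)
    (hfconv : ConvexOn ℝ Q f)
    (L δ : ℝ) (hL : 0 < L) (hδ : 0 ≤ δ)
    (hsmooth : ∀ x ∈ Q, ∀ y ∈ Q,
      f y ≤ f x + ⟪f' x, y - x⟫ + (L / 2) * ‖y - x‖ ^ 2 + δ)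
    (xstar : H) (hxstar : xstar ∈ Q) (hmin : ∀ y ∈ Q, f xstar ≤ f y)
    (x : ℕ → H) (hx0 : x 0 ∈ Q)
    (hstep : ∀ k : ℕ, x (k + 1) ∈ Q ∧
      ∀ z ∈ Q, ⟪x k - (1 / L) • f' (x k) - x (k + 1), z - x (k + 1)⟫ ≤ 0) :
    ∀ N : ℕ, 1 ≤ N →
      f ((N : ℝ)⁻¹ • ∑ k ∈ Finset.Icc 1 N, x k) - f xstar ≤
        L * ‖x 0 - xstar‖ ^ 2 / (2 * N) + δ := by
  -- all iterates are in Q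
  have hxQ : ∀ k, x k ∈ Q := by
    intro k; cases k with
    | zero => exact hx0
    | succ n => exact (hstep n).1
  -- per-step descent bound
  have key : ∀ k : ℕ, f (x (k+1)) - f xstar ≤
      L / 2 * (‖x k - xstar‖ ^ 2 - ‖x (k+1) - xstar‖ ^ 2) + δ := by
    intro k
    set a := x k
    set b := x (k+1)
    set g := f' (x k)
    have h1 : f b ≤ f a + ⟪g, b - a⟫ + (L / 2) * ‖b - a‖ ^ 2 + δ :=
      hsmooth a (hxQ k) b (hxQ (k+1))
    have h2 : f a + ⟪g, xstar - a⟫ ≤ f xstar :=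
      grad_convex_ineq hQconv hf hfconv (hxQ k) hxstar
    have h3 : ⟪a - (1 / L) • g - b, xstar - b⟫ ≤ 0 :=
      (hstep k).2 xstar hxstar
    have h3' : ⟪g, b - xstar⟫ ≤ L * ⟪a - b, b - xstar⟫ := by
      rw [sub_sub, inner_sub_left, inner_add_left, real_inner_smul_left] at h3
      have e1 : ⟪g, b - xstar⟫ = -⟪g, xstar - b⟫ := by
        rw [← inner_neg_right]; congr 1; abel
      have e2 : ⟪a - b, b - xstar⟫ = ⟪b, xstar - b⟫ - ⟪a, xstar - b⟫ := by
        rw [inner_sub_left, show b - xstar = -(xstar - b) by abel,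
          inner_neg_right, inner_neg_right]; ring
      rw [e1, e2]
      have h5 := mul_le_mul_of_nonneg_left h3 hL.le
      rw [mul_zero] at h5
      have hLL : L * (1/L * ⟪g, xstar - b⟫) = ⟪g, xstar - b⟫ := by
        field_simp
      nlinarith [h5, hLL]
    have hident : ‖a - xstar‖ ^ 2 =
        ‖a - b‖ ^ 2 + 2 * ⟪a - b, b - xstar⟫ + ‖b - xstar‖ ^ 2 := by
      have h := norm_add_sq_real (a - b) (b - xstar)
      have : a - b + (b - xstar) = a - xstar := by abel
      rw [this] at h
      linarith [h]
    have hba : ‖b - a‖ = ‖a - b‖ := norm_sub_rev b a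
    have hsum : ⟪g, b - a⟫ + ⟪g, a - xstar⟫ = ⟪g, b - xstar⟫ := by
      rw [← inner_add_right]; congr 1; abel
    have h2' : f a ≤ f xstar + ⟪g, a - xstar⟫ := by
      have : ⟪g, xstar - a⟫ = - ⟪g, a - xstar⟫ := by
        rw [← inner_neg_right]; congr 1; abel
      rw [this] at h2; linarith
    rw [hba] at h1
    nlinarith [h1, h2', h3', hident, hsum]
  intro N hN
  have hNpos : (0:ℝ) < N := by exact_mod_cast hN
  -- telescoping sum
  have hsum : ∑ k ∈ Finset.range N, (f (x (k+1)) - f xstar) ≤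
      L / 2 * ‖x 0 - xstar‖ ^ 2 + N * δ := by
    calc ∑ k ∈ Finset.range N, (f (x (k+1)) - f xstar)
        ≤ ∑ k ∈ Finset.range N,
            (L / 2 * (‖x k - xstar‖ ^ 2 - ‖x (k+1) - xstar‖ ^ 2) + δ) :=
          Finset.sum_le_sum fun k _ => key k
      _ = L / 2 * (‖x 0 - xstar‖ ^ 2 - ‖x N - xstar‖ ^ 2) + N * δ := by
          rw [Finset.sum_add_distrib, ← Finset.mul_sum,
            Finset.sum_range_sub' (fun k => ‖x k - xstar‖ ^ 2),
            Finset.sum_const, Finset.card_range, nsmul_eq_mul]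
      _ ≤ L / 2 * ‖x 0 - xstar‖ ^ 2 + N * δ := by
          have h1 : (0:ℝ) ≤ ‖x N - xstar‖ ^ 2 := by positivity
          nlinarith [h1]
  -- Jensen
  have hw : ∑ _k ∈ Finset.Icc 1 N, (N:ℝ)⁻¹ = 1 := by
    rw [Finset.sum_const, Nat.card_Icc, nsmul_eq_mul]
    push_cast
    field_simp
  have hjensen : f ((N : ℝ)⁻¹ • ∑ k ∈ Finset.Icc 1 N, x k) ≤
      ∑ k ∈ Finset.Icc 1 N, (N:ℝ)⁻¹ * f (x k) := by
    have := hfconv.map_sum_le (t := Finset.Icc 1 N) (w := fun _ => (N:ℝ)⁻¹)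
      (p := fun k => x k) (fun i _ => by positivity) hw (fun i _ => hxQ i)
    rw [← Finset.smul_sum] at this
    exact this
  have hre : ∑ k ∈ Finset.Icc 1 N, f (x k) = ∑ k ∈ Finset.range N, f (x (k+1)) := by
    rw [show Finset.Icc 1 N = Finset.Ico 1 (N+1) by rw [Finset.Ico_add_one_right_eq_Icc],
      Finset.sum_Ico_eq_sum_range]
    simp [add_comm]
  have hsum2 : ∑ k ∈ Finset.Icc 1 N, (N:ℝ)⁻¹ * f (x k)
      = (N:ℝ)⁻¹ * ∑ k ∈ Finset.range N, f (x (k+1)) := by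
    rw [← Finset.mul_sum, hre]
  have hfsum : ∑ k ∈ Finset.range N, f (x (k+1)) ≤
      N * f xstar + L / 2 * ‖x 0 - xstar‖ ^ 2 + N * δ := by
    have : ∑ k ∈ Finset.range N, (f (x (k+1)) - f xstar)
        = ∑ k ∈ Finset.range N, f (x (k+1)) - N * f xstar := by
      rw [Finset.sum_sub_distrib, Finset.sum_const, Finset.card_range, nsmul_eq_mul]
    linarith [hsum, this.symm.le, this.le]
  have : f ((N : ℝ)⁻¹ • ∑ k ∈ Finset.Icc 1 N, x k) ≤
      f xstar + L * ‖x 0 - xstar‖ ^ 2 / (2 * N) + δ := by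
    calc f ((N : ℝ)⁻¹ • ∑ k ∈ Finset.Icc 1 N, x k)
        ≤ (N:ℝ)⁻¹ * ∑ k ∈ Finset.range N, f (x (k+1)) := by
          rw [← hsum2]; exact hjensen
      _ ≤ (N:ℝ)⁻¹ * (N * f xstar + L / 2 * ‖x 0 - xstar‖ ^ 2 + N * δ) :=
          mul_le_mul_of_nonneg_left hfsum (by positivity)
      _ = f xstar + L * ‖x 0 - xstar‖ ^ 2 / (2 * N) + δ := by
          field_simp
  linarith
end

section
/- (Nonsmooth rate (2.35).) Let Q ⊆ H be a nonempty closed convex set, let f : H → ℝ be Fréchet differentiable and convex on Q, let L₀ > 0, and assume the Hölder condition with exponent ν = 0: ‖∇f(y) − ∇f(x)‖ ≤ L₀ for all x, y ∈ Q. Let x* be a minimizer of f over Q, let x⁰ ∈ Q with R = ‖x⁰ − x*‖ > 0, fix N ≥ 1, set the step size h = R/(L₀·√N), and let (x^k) ⊆ Q be such that, for every k, x^{k+1} is a projected gradient step from x^k with step size h on Q. Then the average x̄^N = (1/N)·Σ_{k=1}^{N} x^k satisfies f(x̄^N) − f(x*) ≤ L₀·R / √N. -/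
open RealInnerProductSpace Set Topology Filter

section helpers
variable {H : Type*} [NormedAddCommGroup H] [InnerProductSpace ℝ H] [CompleteSpace H]
  {f : H → ℝ} {f' : H → H}

lemma line_hasDerivAt (hf : ∀ x, HasGradientAt f (f' x) x) (a v : H) (t : ℝ) :
    HasDerivAt (fun s : ℝ => f (a + s • v)) ⟪f' (a + t • v), v⟫ t := by
  have h1 : HasDerivAt (fun s : ℝ => a + s • v) v t := by
    simpa using ((hasDerivAt_id t).smul_const v).const_add a
  have h2 := (hasGradientAt_iff_hasFDerivAt.mp (hf (a + t • v))).comp_hasDerivAt t h1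
  simp [InnerProductSpace.toDual_apply_apply] at h2
  exact h2

lemma grad_lower {Q : Set H} (hQconv : Convex ℝ Q)
    (hf : ∀ x, HasGradientAt f (f' x) x) (hfconv : ConvexOn ℝ Q f)
    {a b : H} (ha : a ∈ Q) (hb : b ∈ Q) :
    f a + ⟪f' a, b - a⟫ ≤ f b := by
  set v := b - a with hv
  set φ := fun s : ℝ => f (a + s • v) with hφ
  have hd : HasDerivAt φ ⟪f' a, v⟫ 0 := by
    simpa using line_hasDerivAt hf a v 0
  have ht : Filter.Tendsto (slope φ 0) (𝓝[>] 0) (𝓝 ⟪f' a, v⟫) :=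
    (hasDerivAt_iff_tendsto_slope.mp hd).mono_left
      (nhdsWithin_mono 0 (fun s hs => ne_of_gt hs))
  have hbound : ∀ᶠ s in 𝓝[>] (0:ℝ), slope φ 0 s ≤ f b - f a := by
    filter_upwards [Ioc_mem_nhdsGT_of_mem (by constructor <;> norm_num : (0:ℝ) ∈ Ico (0:ℝ) 1)]
      with s hs
    have hs0 : 0 < s := hs.1
    have hseg : a + s • v = (1 - s) • a + s • b := by
      simp [hv, smul_sub, sub_smul]; abel
    have hcv := hfconv.2 ha hb (by linarith [hs.2] : 0 ≤ 1 - s) hs0.le (by ring)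
    rw [slope_def_field]
    have hφs : φ s ≤ (1 - s) * f a + s * f b := by rw [hφ]; simp only; rw [hseg]; simpa using hcv
    have hφ0 : φ 0 = f a := by simp [hφ]
    rw [sub_zero, div_le_iff₀ hs0, hφ0]
    nlinarith [hφs]
  have := le_of_tendsto ht hbound
  linarith [this]


lemma grad_upper {Q : Set H} (hQconv : Convex ℝ Q)
    (hf : ∀ x, HasGradientAt f (f' x) x)
    {L₀ : ℝ} (hHolder : ∀ x ∈ Q, ∀ y ∈ Q, ‖f' y - f' x‖ ≤ L₀)
    {a b : H} (ha : a ∈ Q) (hb : b ∈ Q) :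
    f b ≤ f a + ⟪f' a, b - a⟫ + L₀ * ‖b - a‖ := by
  set v := b - a with hv
  set φ := fun s : ℝ => f (a + s • v) with hφ
  have hd : ∀ t : ℝ, HasDerivAt φ ⟪f' (a + t • v), v⟫ t := line_hasDerivAt hf a v
  have hcont : ContinuousOn φ (Icc 0 1) :=
    (continuous_iff_continuousAt.mpr fun t => (hd t).continuousAt).continuousOn
  obtain ⟨c, hc, hceq⟩ := exists_hasDerivAt_eq_slope φ (fun t => ⟪f' (a + t • v), v⟫)
    (by norm_num : (0:ℝ) < 1) hcont (fun t _ => hd t)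
  have hmem : a + c • v ∈ Q := by
    have := hQconv ha hb (by linarith [hc.2] : 0 ≤ 1 - c) hc.1.le (by ring)
    have hseg : (1 - c) • a + c • b = a + c • v := by
      simp [hv, smul_sub, sub_smul]; abel
    rwa [hseg] at this
  have hφ1 : φ 1 = f b := by simp [hφ, hv]
  have hφ0 : φ 0 = f a := by simp [hφ]
  have hsplit : ⟪f' (a + c • v), v⟫ = ⟪f' a, v⟫ + ⟪f' (a + c • v) - f' a, v⟫ := by
    rw [inner_sub_left]; ring
  have hcs : ⟪f' (a + c • v) - f' a, v⟫ ≤ L₀ * ‖v‖ :=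
    le_trans (real_inner_le_norm _ _)
      (mul_le_mul_of_nonneg_right (hHolder a ha _ hmem) (norm_nonneg v))
  rw [hφ1, hφ0] at hceq
  have : f b - f a = ⟪f' (a + c • v), v⟫ := by rw [hceq]; ring
  linarith [hsplit ▸ this, hcs]

end helpers

/-- Nonsmooth rate (2.35): projected subgradient/gradient method with uniformly
bounded gradients (Hölder exponent ν = 0) and step h = R/(L₀√N) achieves
f(x̄^N) − f(x*) ≤ L₀R/√N. -/
theorem projected_gradient_nonsmooth_rate
    {H : Type*} [NormedAddCommGroup H] [InnerProductSpace ℝ H] [CompleteSpace H]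
    (Q : Set H) (hQne : Q.Nonempty) (hQcl : IsClosed Q) (hQconv : Convex ℝ Q)
    (f : H → ℝ) (f' : H → H) (hf : ∀ x, HasGradientAt f (f' x) x)
    (hfconv : ConvexOn ℝ Q f)
    (L₀ : ℝ) (hL₀ : 0 < L₀)
    (hHolder : ∀ x ∈ Q, ∀ y ∈ Q, ‖f' y - f' x‖ ≤ L₀)
    (xstar : H) (hxstar : xstar ∈ Q) (hmin : ∀ y ∈ Q, f xstar ≤ f y)
    (x : ℕ → H) (hx0 : x 0 ∈ Q) (hR : 0 < ‖x 0 - xstar‖)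
    (N : ℕ) (hN : 1 ≤ N)
    (hstep : ∀ k : ℕ, x (k + 1) ∈ Q ∧
      ∀ z ∈ Q, ⟪x k - (‖x 0 - xstar‖ / (L₀ * Real.sqrt N)) • f' (x k) - x (k + 1),
                  z - x (k + 1)⟫ ≤ 0) :
    f ((N : ℝ)⁻¹ • ∑ k ∈ Finset.Icc 1 N, x k) - f xstar ≤
      L₀ * ‖x 0 - xstar‖ / Real.sqrt N := by
  set R := ‖x 0 - xstar‖ with hRdef
  set sN := Real.sqrt N with hsN
  have hNpos : (0:ℝ) < N := by exact_mod_cast Nat.lt_of_lt_of_le Nat.zero_lt_one hN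
  have hsNpos : 0 < sN := Real.sqrt_pos.mpr hNpos
  have hsNsq : sN * sN = N := Real.mul_self_sqrt hNpos.le
  set h := R / (L₀ * sN) with hhdef
  have hh : 0 < h := div_pos hR (mul_pos hL₀ hsNpos)
  -- all iterates are in Q
  have hxQ : ∀ k, x k ∈ Q := by
    intro k; induction k with
    | zero => exact hx0
    | succ n _ => exact (hstep n).1
  -- key per-step inequality
  have key : ∀ k : ℕ, h * (f (x (k+1)) - f xstar) ≤
      (‖x k - xstar‖^2 - ‖x (k+1) - xstar‖^2)/2 + h^2 * L₀^2 / 2 := by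
    intro k
    set a := x k
    set b := x (k+1)
    set g := f' (x k) with hg
    have vi := (hstep k).2 xstar hxstar
    have hrw : a - h • g - b = (a - b) - h • g := by abel
    rw [hrw, inner_sub_left, real_inner_smul_left] at vi
    -- vi : ⟪a - b, xstar - b⟫ - h * ⟪g, xstar - b⟫ ≤ 0
    have pol : ‖a - xstar‖^2 = ‖a - b‖^2 + 2 * ⟪a - b, b - xstar⟫ + ‖b - xstar‖^2 := by
      have := norm_add_sq_real (a - b) (b - xstar)
      have h2 : (a - b) + (b - xstar) = a - xstar := by abel
      rw [h2] at this; linarith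
    have fub : f b ≤ f a + ⟪g, b - a⟫ + L₀ * ‖b - a‖ :=
      grad_upper hQconv hf hHolder (hxQ k) (hxQ (k+1))
    have flb : f a + ⟪g, xstar - a⟫ ≤ f xstar :=
      grad_lower hQconv hf hfconv (hxQ k) hxstar
    -- inner product algebra
    have e1 : ⟪a - b, xstar - b⟫ = -⟪a - b, b - xstar⟫ := by
      rw [← inner_neg_right]; congr 1; abel
    have e2 : ⟪g, xstar - b⟫ = -⟪g, b - xstar⟫ := by
      rw [← inner_neg_right]; congr 1; abel
    have e3 : ⟪g, b - a⟫ = ⟪g, b - xstar⟫ + ⟪g, xstar - a⟫ := by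
      simp only [inner_sub_right]; ring
    rw [e1, e2] at vi
    -- f b - f xstar ≤ ⟪g, b - xstar⟫ + L₀‖b - a‖
    have hfb : f b - f xstar ≤ ⟪g, b - xstar⟫ + L₀ * ‖b - a‖ := by linarith
    have hstep1 : h * (f b - f xstar) ≤ h * (⟪g, b - xstar⟫ + L₀ * ‖b - a‖) :=
      mul_le_mul_of_nonneg_left hfb hh.le
    have hvi' : h * ⟪g, b - xstar⟫ ≤ ⟪a - b, b - xstar⟫ := by linarith
    have hnrm : ‖b - a‖ = ‖a - b‖ := norm_sub_rev _ _
    rw [hnrm] at hstep1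
    nlinarith [sq_nonneg (h * L₀ - ‖a - b‖), sq_nonneg (‖a - b‖)]
  -- telescoping sum
  have tele : ∑ k ∈ Finset.range N, (‖x k - xstar‖^2 - ‖x (k+1) - xstar‖^2)
      = ‖x 0 - xstar‖^2 - ‖x N - xstar‖^2 :=
    Finset.sum_range_sub' (fun k => ‖x k - xstar‖^2) N
  have sumkey : h * ∑ k ∈ Finset.range N, (f (x (k+1)) - f xstar)
      ≤ R^2/2 + N * (h^2 * L₀^2 / 2) := by
    rw [Finset.mul_sum]
    calc ∑ k ∈ Finset.range N, h * (f (x (k+1)) - f xstar)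
        ≤ ∑ k ∈ Finset.range N, ((‖x k - xstar‖^2 - ‖x (k+1) - xstar‖^2)/2 + h^2 * L₀^2/2) :=
          Finset.sum_le_sum fun k _ => key k
      _ = (‖x 0 - xstar‖^2 - ‖x N - xstar‖^2)/2 + N * (h^2 * L₀^2 / 2) := by
          rw [Finset.sum_add_distrib, ← Finset.sum_div, tele, Finset.sum_const,
            Finset.card_range, nsmul_eq_mul]
      _ ≤ R^2/2 + N * (h^2 * L₀^2 / 2) := by
          have := sq_nonneg ‖x N - xstar‖; rw [← hRdef]; linarith
  -- reindex
  have reidx : ∑ k ∈ Finset.Icc 1 N, (f (x k) - f xstar)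
      = ∑ k ∈ Finset.range N, (f (x (k+1)) - f xstar) := by
    rw [← Finset.Ico_add_one_right_eq_Icc, Finset.sum_Ico_eq_sum_range]
    simp [add_comm]
  -- Jensen
  have hcard : (Finset.Icc 1 N).card = N := by simp
  have hwsum : ∑ _k ∈ Finset.Icc 1 N, (N:ℝ)⁻¹ = 1 := by
    rw [Finset.sum_const, hcard, nsmul_eq_mul, mul_inv_cancel₀ (ne_of_gt hNpos)]
  have jens := hfconv.map_sum_le (p := x) (fun i _ => inv_nonneg.mpr hNpos.le) hwsum
    (fun i _ => hxQ i)
  rw [← Finset.smul_sum] at jens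
  simp only [smul_eq_mul, ← Finset.mul_sum] at jens
  -- bound on the sum
  have heq : R^2/2 + N * (h^2 * L₀^2 / 2) = h * (N * (L₀ * R / sN)) := by
    rw [hhdef, ← hsNsq]
    field_simp
    ring
  have hsum_le : ∑ k ∈ Finset.Icc 1 N, (f (x k) - f xstar) ≤ N * (L₀ * R / sN) := by
    rw [reidx]
    rw [heq] at sumkey
    exact le_of_mul_le_mul_left sumkey hh
  have hsum2 : ∑ k ∈ Finset.Icc 1 N, f (x k) ≤ N * (L₀ * R / sN) + N * f xstar := by
    rw [Finset.sum_sub_distrib, Finset.sum_const, hcard, nsmul_eq_mul] at hsum_le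
    linarith
  have hfinal : (N:ℝ)⁻¹ * ∑ k ∈ Finset.Icc 1 N, f (x k)
      ≤ (N:ℝ)⁻¹ * (N * (L₀ * R / sN) + N * f xstar) :=
    mul_le_mul_of_nonneg_left hsum2 (inv_nonneg.mpr hNpos.le)
  have hid : (N:ℝ)⁻¹ * (N * (L₀ * R / sN) + N * f xstar) = L₀ * R / sN + f xstar := by
    field_simp
  linarith [jens.trans (hid ▸ hfinal)]
end

section
/- (Theorem 3.1: gradient-type method with a (δ, L)-model of the objective.) Let Q ⊆ H be a nonempty closed convex set, L > 0, δ ≥ 0, δ̃ ≥ 0. Let d : H → ℝ be Fréchet differentiable and 1-strongly convex on Q, and let V(x, y) = d(x) − d(y) − ⟨∇d(y), x − y⟩ be the associated Bregman divergence. Let f : H → ℝ be convex on Q and let (f_δ, ψ_δ) be a (δ, L)-model of f on Q: for every x ∈ Q, the function y ↦ ψ_δ(y, x) is convex on Q, ψ_δ(x, x) = 0, and 0 ≤ f(y) − (f_δ(x) + ψ_δ(y, x)) ≤ (L/2)‖y − x‖² + δ for all x, y ∈ Q. Let x* minimize f over Q, let x⁰ ∈ Q, and let (x^k) ⊆ Q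 be a sequence such that for every k there exists g_k ∈ H with: (i) ψ_δ(z, x^k) ≥ ψ_δ(x^{k+1}, x^k) + ⟨g_k, z − x^{k+1}⟩ for all z ∈ Q (g_k is a subgradient of ψ_δ(·, x^k) at x^{k+1} on Q), and (ii) ⟨g_k + L·(∇d(x^{k+1}) − ∇d(x^k)), x^{k+1} − x*⟩ ≤ δ̃ (the step x^{k+1} solves argmin over Q of ψ_δ(·, x^k) + L·V(·, x^k) with accuracy δ̃). Then for every N ≥ 1, the average x̄^N = (1/N)·Σ_{k=1}^{N} x^k satisfies f(x̄^N) − f(x*) ≤ L·V(x*, x⁰)/N + δ̃ + 2δ. -/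
open RealInnerProductSpace

open Filter Topology Set in
lemma convexOn_fderiv_le {H : Type*} [NormedAddCommGroup H] [InnerProductSpace ℝ H]
    {φ : H → ℝ} {s : Set H} (hconv : ConvexOn ℝ s φ)
    {x y : H} (hx : x ∈ s) (hy : y ∈ s) {ℓ : H →L[ℝ] ℝ} (hφ : HasFDerivAt φ ℓ x) :
    φ x + ℓ (y - x) ≤ φ y := by
  set v := y - x with hv
  have hc : HasDerivAt (fun t : ℝ => x + t • v) v 0 := by
    simpa using ((hasDerivAt_id (0:ℝ)).smul_const v).const_add x
  have hcomp : HasDerivAt (fun t : ℝ => φ (x + t • v)) (ℓ v) 0 := by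
    have hφ' : HasFDerivAt φ ℓ (x + (0:ℝ) • v) := by simpa using hφ
    have := hφ'.comp_hasDerivAt 0 hc
    exact this
  have htend := hasDerivAt_iff_tendsto_slope.mp hcomp
  have hmono : (𝓝[>] (0:ℝ)) ≤ 𝓝[≠] (0:ℝ) :=
    nhdsWithin_mono 0 (fun t ht => ne_of_gt ht)
  have hbound : ∀ᶠ t in 𝓝[>] (0:ℝ),
      slope (fun t : ℝ => φ (x + t • v)) 0 t ≤ φ y - φ x := by
    filter_upwards [Ioc_mem_nhdsGT_of_mem (Set.mem_Ico.mpr ⟨le_refl (0:ℝ), one_pos⟩)]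
      with t ht
    obtain ⟨ht0, ht1⟩ := ht
    have hpt : x + t • v = (1 - t) • x + t • y := by
      rw [hv]; module
    have hcvx : φ (x + t • v) ≤ (1 - t) * φ x + t * φ y := by
      rw [hpt]
      exact hconv.2 hx hy (by linarith) (le_of_lt ht0) (by ring)
    have hsl : slope (fun t : ℝ => φ (x + t • v)) 0 t
        = (φ (x + t • v) - φ x) / t := by
      simp [slope_def_field]
    rw [hsl, div_le_iff₀ ht0]
    nlinarith
  have := le_of_tendsto (htend.mono_left hmono) hbound
  linarith

/-- Theorem 3.1: gradient-type method based on a (δ, L)-model of the objective and a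
Bregman divergence V generated by a 1-strongly convex prox-function d, with each step
solving the prox subproblem with accuracy δ̃, satisfies
f(x̄^N) − f(x*) ≤ L·V(x*, x⁰)/N + δ̃ + 2δ. -/
theorem model_gradient_method_rate
    {H : Type*} [NormedAddCommGroup H] [InnerProductSpace ℝ H] [CompleteSpace H]
    (Q : Set H) (hQne : Q.Nonempty) (hQcl : IsClosed Q) (hQconv : Convex ℝ Q)
    (L δ δ' : ℝ) (hL : 0 < L) (hδ : 0 ≤ δ) (hδ' : 0 ≤ δ')
    (d : H → ℝ) (d' : H → H) (hd : ∀ x, HasGradientAt d (d' x) x)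
    (hdsc : ConvexOn ℝ Q (fun x : H => d x - (1 / 2) * ‖x‖ ^ 2))
    (V : H → H → ℝ) (hV : ∀ x y : H, V x y = d x - d y - ⟪d' y, x - y⟫)
    (f : H → ℝ) (hfconv : ConvexOn ℝ Q f)
    (fδ : H → ℝ) (ψ : H → H → ℝ)
    (hψconv : ∀ x ∈ Q, ConvexOn ℝ Q (fun y : H => ψ y x))
    (hψzero : ∀ x ∈ Q, ψ x x = 0)
    (hmodel : ∀ x ∈ Q, ∀ y ∈ Q,
      0 ≤ f y - (fδ x + ψ y x) ∧ f y - (fδ x + ψ y x) ≤ (L / 2) * ‖y - x‖ ^ 2 + δ)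
    (xstar : H) (hxstar : xstar ∈ Q) (hmin : ∀ y ∈ Q, f xstar ≤ f y)
    (x : ℕ → H) (hxQ : ∀ k : ℕ, x k ∈ Q)
    (g : ℕ → H)
    (hsub : ∀ k : ℕ, ∀ z ∈ Q,
      ψ (x (k + 1)) (x k) + ⟪g k, z - x (k + 1)⟫ ≤ ψ z (x k))
    (hstep : ∀ k : ℕ,
      ⟪g k + L • (d' (x (k + 1)) - d' (x k)), x (k + 1) - xstar⟫ ≤ δ') :
    ∀ N : ℕ, 1 ≤ N →
      f ((N : ℝ)⁻¹ • ∑ k ∈ Finset.Icc 1 N, x k) - f xstar ≤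
        L * V xstar (x 0) / N + δ' + 2 * δ := by
  -- strong convexity lower bound on V
  have hV_lb : ∀ a ∈ Q, ∀ b ∈ Q, (1/2 : ℝ) * ‖a - b‖ ^ 2 ≤ V a b := by
    intro a ha b hb
    have hdfd : HasFDerivAt d (InnerProductSpace.toDual ℝ H (d' b)) b :=
      hasGradientAt_iff_hasFDerivAt.mp (hd b)
    have hinner : HasFDerivAt (fun z : H => ⟪z, z⟫)
        ((fderivInnerCLM ℝ ((b : H), b)).comp
          ((ContinuousLinearMap.id ℝ H).prod (ContinuousLinearMap.id ℝ H))) b :=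
      (hasFDerivAt_id b).inner ℝ (hasFDerivAt_id b)
    have hnsq : HasFDerivAt (fun z : H => (1/2 : ℝ) * ‖z‖ ^ 2)
        ((1/2 : ℝ) • ((fderivInnerCLM ℝ ((b : H), b)).comp
          ((ContinuousLinearMap.id ℝ H).prod (ContinuousLinearMap.id ℝ H)))) b := by
      have := hinner.const_mul (1/2 : ℝ)
      convert this using 2 with z
      · rfl
      · rw [real_inner_self_eq_norm_sq]
    have hφ : HasFDerivAt (fun z : H => d z - (1/2 : ℝ) * ‖z‖ ^ 2)
        (InnerProductSpace.toDual ℝ H (d' b) -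
          (1/2 : ℝ) • ((fderivInnerCLM ℝ ((b : H), b)).comp
          ((ContinuousLinearMap.id ℝ H).prod (ContinuousLinearMap.id ℝ H)))) b :=
      hdfd.sub hnsq
    have hkey := convexOn_fderiv_le (by simpa using hdsc) hb ha hφ
    have heval : (InnerProductSpace.toDual ℝ H (d' b) -
          (1/2 : ℝ) • ((fderivInnerCLM ℝ ((b : H), b)).comp
          ((ContinuousLinearMap.id ℝ H).prod (ContinuousLinearMap.id ℝ H)))) (a - b)
        = ⟪d' b, a - b⟫ - ⟪b, a - b⟫ := by
      simp [fderivInnerCLM_apply, real_inner_comm]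
      ring
    rw [heval] at hkey
    have hexp : ‖a - b‖ ^ 2 = ‖a‖ ^ 2 - 2 * ⟪a, b⟫ + ‖b‖ ^ 2 := by
      rw [norm_sub_sq_real]
    have hib : ⟪b, a - b⟫ = ⟪a, b⟫ - ‖b‖ ^ 2 := by
      rw [inner_sub_right, real_inner_self_eq_norm_sq, real_inner_comm]
    rw [hV]
    nlinarith
  have hVnonneg : ∀ a ∈ Q, ∀ b ∈ Q, 0 ≤ V a b := by
    intro a ha b hb
    have := hV_lb a ha b hb
    nlinarith [sq_nonneg ‖a - b‖]
  -- per-step inequality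
  have hkey : ∀ k : ℕ, f (x (k+1)) ≤ f xstar + δ + δ' +
      L * (V xstar (x k) - V xstar (x (k+1))) := by
    intro k
    have h1 := (hmodel (x k) (hxQ k) (x (k+1)) (hxQ (k+1))).2
    have h2 := hsub k xstar hxstar
    have h3 := (hmodel (x k) (hxQ k) xstar hxstar).1
    have h4 := hstep k
    -- expand step inequality
    have h4' : ⟪g k, x (k+1) - xstar⟫ +
        L * ⟪d' (x (k+1)) - d' (x k), x (k+1) - xstar⟫ ≤ δ' := by
      rw [inner_add_left, real_inner_smul_left] at h4
      linarith
    -- three point identity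
    have h5 : ⟪d' (x (k+1)) - d' (x k), x (k+1) - xstar⟫
        = V xstar (x (k+1)) + V (x (k+1)) (x k) - V xstar (x k) := by
      rw [hV, hV, hV]
      simp only [inner_sub_left, inner_sub_right]
      ring
    have h6 := hV_lb (x (k+1)) (hxQ (k+1)) (x k) (hxQ k)
    have h6' : L * ((1/2 : ℝ) * ‖x (k+1) - x k‖ ^ 2) ≤ L * V (x (k+1)) (x k) :=
      mul_le_mul_of_nonneg_left h6 hL.le
    have h2' : ⟪g k, xstar - x (k+1)⟫ = - ⟪g k, x (k+1) - xstar⟫ := by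
      rw [show xstar - x (k+1) = -(x (k+1) - xstar) by abel, inner_neg_right]
    rw [h2'] at h2
    rw [h5] at h4'
    nlinarith
  -- telescoping sum
  have hsum : ∀ N : ℕ, ∑ k ∈ Finset.Icc 1 N, f (x k) ≤
      N * (f xstar + δ + δ') + L * (V xstar (x 0) - V xstar (x N)) := by
    intro N
    induction N with
    | zero => simp
    | succ n ih =>
      rw [Finset.sum_Icc_succ_top (by omega)]
      have := hkey n
      push_cast
      nlinarith
  intro N hN
  have hNpos : (0 : ℝ) < N := by exact_mod_cast hN
  -- Jensen
  have hcard : (Finset.Icc 1 N).card = N := by simp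
  have hjen : f ((N : ℝ)⁻¹ • ∑ k ∈ Finset.Icc 1 N, x k) ≤
      ∑ k ∈ Finset.Icc 1 N, (N : ℝ)⁻¹ * f (x k) := by
    have := hfconv.map_sum_le (t := Finset.Icc 1 N) (w := fun _ => (N : ℝ)⁻¹)
      (p := fun k => x k) (fun i _ => by positivity)
      (by simp [hcard, mul_inv_cancel₀ (ne_of_gt hNpos)])
      (fun i _ => hxQ i)
    rwa [Finset.smul_sum.symm] at this
  rw [← Finset.mul_sum] at hjen
  have hsumN := hsum N
  have hVN := hVnonneg xstar hxstar (x N) (hxQ N)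
  have hmul : (N : ℝ)⁻¹ * ∑ k ∈ Finset.Icc 1 N, f (x k) ≤
      (N : ℝ)⁻¹ * (N * (f xstar + δ + δ') + L * (V xstar (x 0) - V xstar (x N))) :=
    mul_le_mul_of_nonneg_left hsumN (by positivity)
  have hfinal : (N : ℝ)⁻¹ * (N * (f xstar + δ + δ') + L * (V xstar (x 0) - V xstar (x N)))
      ≤ f xstar + δ + δ' + L * V xstar (x 0) / N := by
    rw [mul_add, inv_mul_cancel_left₀ (ne_of_gt hNpos)]
    have : (N : ℝ)⁻¹ * (L * (V xstar (x 0) - V xstar (x N))) ≤ L * V xstar (x 0) / N := by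
      rw [div_eq_inv_mul]
      apply mul_le_mul_of_nonneg_left _ (by positivity)
      nlinarith
    linarith
  have hδδ : δ ≤ 2 * δ := by linarith
  linarith
end

section
/- (Exercise 3.1, part 2.) Let f : H → ℝ be Fréchet differentiable with L-Lipschitz gradient, L > 0, and μ-strongly convex with μ > 0. Let x* be the global minimizer of f (so ∇f(x*) = 0), let ε ≥ 0, and let x_ε ∈ H satisfy f(x_ε) − f(x*) ≤ ε. Then ⟨∇f(x_ε), x_ε − x*⟩ ≤ 2ε·√(L/μ). -/
open RealInnerProductSpace

/-- First-order condition for a convex function with a gradient. -/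
lemma convexOn_grad_inequality' {H : Type*} [NormedAddCommGroup H] [InnerProductSpace ℝ H]
    [CompleteSpace H] (φ : H → ℝ) (g x y : H)
    (hconv : ConvexOn ℝ Set.univ φ) (hg : HasGradientAt φ g x) :
    φ x + ⟪g, y - x⟫ ≤ φ y := by
  set ψ : ℝ → ℝ := fun t => φ (x + t • (y - x)) with hψ
  have hψconv : ConvexOn ℝ Set.univ ψ := by
    have h := hconv.comp_affineMap (AffineMap.lineMap x y : ℝ →ᵃ[ℝ] H)
    have : (Set.univ : Set ℝ) = (AffineMap.lineMap x y : ℝ →ᵃ[ℝ] H) ⁻¹' Set.univ := by simp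
    rw [this]
    have h2 : ψ = φ ∘ (AffineMap.lineMap x y : ℝ →ᵃ[ℝ] H) := by
      funext t
      simp [hψ, AffineMap.lineMap_apply, add_comm]
    rw [h2]
    exact h
  have hcurve : HasDerivAt (fun t : ℝ => x + t • (y - x)) (y - x) 0 := by
    simpa using ((hasDerivAt_id (0:ℝ)).smul_const (y - x)).const_add x
  have hF : HasFDerivAt φ (InnerProductSpace.toDual ℝ H g) x :=
    hasGradientAt_iff_hasFDerivAt.mp hg
  have hd : HasDerivAt ψ ⟪g, y - x⟫ 0 := by
    have hF' : HasFDerivAt φ (InnerProductSpace.toDual ℝ H g)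
        ((fun t : ℝ => x + t • (y - x)) 0) := by simpa using hF
    have := hF'.comp_hasDerivAt 0 hcurve
    exact this
  have := hψconv.le_slope_of_hasDerivWithinAt_Ioi (Set.mem_univ (0:ℝ)) (Set.mem_univ (1:ℝ))
    one_pos hd.hasDerivWithinAt
  have hslope : slope ψ 0 1 = φ y - φ x := by
    simp [slope_def_field, hψ]
  rw [hslope] at this
  linarith

/-- Smoothness upper bound (descent lemma ingredient). -/
lemma smooth_upper_bound' {H : Type*} [NormedAddCommGroup H] [InnerProductSpace ℝ H]
    [CompleteSpace H] (f : H → ℝ) (f' : H → H) (hf : ∀ x, HasGradientAt f (f' x) x)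
    (L : ℝ) (hL : 0 < L) (hlip : ∀ x y : H, ‖f' y - f' x‖ ≤ L * ‖y - x‖) (x v : H) :
    f (x + v) ≤ f x + ⟪f' x, v⟫ + L / 2 * ‖v‖ ^ 2 := by
  set h : ℝ → ℝ := fun t => f (x + t • v) - t * ⟪f' x, v⟫ - L / 2 * t ^ 2 * ‖v‖ ^ 2 with hh
  have hderiv : ∀ t : ℝ,
      HasDerivAt h (⟪f' (x + t • v), v⟫ - ⟪f' x, v⟫ - L * t * ‖v‖ ^ 2) t := by
    intro t
    have hcurve : HasDerivAt (fun s : ℝ => x + s • v) v t := by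
      simpa using ((hasDerivAt_id t).smul_const v).const_add x
    have h1 : HasDerivAt (fun s : ℝ => f (x + s • v)) ⟪f' (x + t • v), v⟫ t := by
      have hF : HasFDerivAt f (InnerProductSpace.toDual ℝ H (f' (x + t • v)))
          ((fun s : ℝ => x + s • v) t) := hasGradientAt_iff_hasFDerivAt.mp (hf _)
      have := hF.comp_hasDerivAt t hcurve
      exact this
    have h2 : HasDerivAt (fun s : ℝ => s * ⟪f' x, v⟫) ⟪f' x, v⟫ t := by
      simpa using (hasDerivAt_id t).mul_const (⟪f' x, v⟫ : ℝ)
    have h3 : HasDerivAt (fun s : ℝ => L / 2 * s ^ 2 * ‖v‖ ^ 2) (L * t * ‖v‖ ^ 2) t := by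
      have := ((hasDerivAt_pow 2 t).const_mul (L / 2)).mul_const (‖v‖ ^ 2)
      have e : L * t * ‖v‖ ^ 2 = L / 2 * ((2:ℕ) * t ^ (2 - 1)) * ‖v‖ ^ 2 := by
        push_cast
        ring
      rw [e]
      exact this
    exact (h1.sub h2).sub h3
  have hdiff : Differentiable ℝ h := fun t => (hderiv t).differentiableAt
  have hmono : AntitoneOn h (Set.Icc 0 1) := by
    apply antitoneOn_of_deriv_nonpos (convex_Icc 0 1) hdiff.continuous.continuousOn
      (hdiff.differentiableOn)
    intro t ht
    rw [interior_Icc] at ht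
    rw [(hderiv t).deriv]
    have hb : ⟪f' (x + t • v) - f' x, v⟫ ≤ ‖f' (x + t • v) - f' x‖ * ‖v‖ :=
      real_inner_le_norm _ _
    have hl : ‖f' (x + t • v) - f' x‖ ≤ L * (t * ‖v‖) := by
      have := hlip x (x + t • v)
      simpa [norm_smul, abs_of_pos ht.1] using this
    have hvn : (0:ℝ) ≤ ‖v‖ := norm_nonneg _
    have : ⟪f' (x + t • v), v⟫ - ⟪f' x, v⟫ ≤ L * t * ‖v‖ ^ 2 := by
      rw [← inner_sub_left]
      calc (⟪f' (x + t • v) - f' x, v⟫ : ℝ) ≤ ‖f' (x + t • v) - f' x‖ * ‖v‖ := hb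
        _ ≤ L * (t * ‖v‖) * ‖v‖ := by nlinarith
        _ = L * t * ‖v‖ ^ 2 := by ring
    linarith
  have h10 : h 1 ≤ h 0 := hmono (Set.mem_Icc.mpr ⟨le_refl 0, zero_le_one⟩)
    (Set.mem_Icc.mpr ⟨zero_le_one, le_refl 1⟩) zero_le_one
  simp [hh] at h10
  linarith

set_option maxHeartbeats 1000000 in
/-- Exercise 3.1, part 2: if f is L-smooth and μ-strongly convex with global minimizer
x*, and x_ε is an ε-approximate minimizer in function value, then
⟪∇f(x_ε), x_ε − x*⟫ ≤ 2ε√(L/μ). -/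
theorem approx_minimizer_inner_bound_strongly_convex
    {H : Type*} [NormedAddCommGroup H] [InnerProductSpace ℝ H] [CompleteSpace H]
    (f : H → ℝ) (f' : H → H) (hf : ∀ x, HasGradientAt f (f' x) x)
    (L : ℝ) (hL : 0 < L)
    (hlip : ∀ x y : H, ‖f' y - f' x‖ ≤ L * ‖y - x‖)
    (μ : ℝ) (hμ : 0 < μ)
    (hsc : ConvexOn ℝ Set.univ (fun x : H => f x - (μ / 2) * ‖x‖ ^ 2))
    (xstar : H) (hmin : ∀ y : H, f xstar ≤ f y)
    (ε : ℝ) (hε : 0 ≤ ε) (xε : H) (hxε : f xε - f xstar ≤ ε) :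
    ⟪f' xε, xε - xstar⟫ ≤ 2 * ε * Real.sqrt (L / μ) := by
  -- gradient at the minimizer is zero
  have hgrad0 : f' xstar = 0 := by
    have hloc : IsLocalMin f xstar := Filter.Eventually.of_forall hmin
    have := hloc.hasFDerivAt_eq_zero (hasGradientAt_iff_hasFDerivAt.mp (hf xstar))
    have h0 : InnerProductSpace.toDual ℝ H (f' xstar) = InnerProductSpace.toDual ℝ H 0 := by
      simpa using this
    exact (InnerProductSpace.toDual ℝ H).injective h0
  -- strong convexity: distance bound
  have hφgrad : HasGradientAt (fun x : H => f x - (μ / 2) * ‖x‖ ^ 2)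
      (f' xstar - μ • xstar) xstar := by
    rw [hasGradientAt_iff_hasFDerivAt]
    have hnsq : HasFDerivAt (fun x : H => (μ / 2) * ‖x‖ ^ 2)
        ((μ / 2) • (2 • (innerSL ℝ xstar))) xstar := by
      have h1 : HasFDerivAt (fun x : H => ‖x‖ ^ 2) (2 • (innerSL ℝ xstar)) xstar := by
        simpa using (hasFDerivAt_id xstar).norm_sq
      simpa using h1.const_mul (μ / 2)
    have := (hasGradientAt_iff_hasFDerivAt.mp (hf xstar)).sub hnsq
    have e : InnerProductSpace.toDual ℝ H (f' xstar - μ • xstar) =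
        InnerProductSpace.toDual ℝ H (f' xstar) - (μ / 2) • (2 • (innerSL ℝ xstar)) := by
      ext y
      simp [InnerProductSpace.toDual_apply_apply, inner_sub_left, real_inner_smul_left, two_smul,
        inner_add_left]
      ring
    rw [e]
    exact this
  have hsc1 := convexOn_grad_inequality' _ _ xstar xε hsc hφgrad
  have hdist : μ / 2 * ‖xε - xstar‖ ^ 2 ≤ ε := by
    rw [hgrad0, zero_sub] at hsc1
    have hinner : ⟪-(μ • xstar), xε - xstar⟫ = -(μ * ⟪xstar, xε⟫) + μ * ‖xstar‖ ^ 2 := by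
      simp [inner_sub_right, real_inner_smul_left, real_inner_self_eq_norm_sq]
    have hdsq : ‖xε - xstar‖ ^ 2 = ‖xε‖ ^ 2 - 2 * ⟪xstar, xε⟫ + ‖xstar‖ ^ 2 := by
      rw [← real_inner_self_eq_norm_sq]
      simp only [inner_sub_left, inner_sub_right, real_inner_self_eq_norm_sq,
        real_inner_comm xε xstar]
      ring
    rw [hinner] at hsc1
    rw [hdsq]
    nlinarith [hsc1, hxε]
  -- descent lemma: gradient norm bound
  have hgsq : ‖f' xε‖ ^ 2 ≤ 2 * L * ε := by
    have hub := smooth_upper_bound' f f' hf L hL hlip xε (-((1 / L) • f' xε))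
    have hlow := hmin (xε + -((1 / L) • f' xε))
    have e1 : (⟪f' xε, -((1 / L) • f' xε)⟫ : ℝ) = -(1 / L) * ‖f' xε‖ ^ 2 := by
      simp [real_inner_smul_right, real_inner_self_eq_norm_sq]
    have e2 : ‖-((1 / L) • f' xε)‖ ^ 2 = (1 / L) ^ 2 * ‖f' xε‖ ^ 2 := by
      rw [norm_neg, norm_smul]
      simp [abs_of_pos hL]
      ring
    rw [e1, e2] at hub
    have key : 1 / (2 * L) * ‖f' xε‖ ^ 2 ≤ ε := by
      have : f xstar ≤ f xε - 1 / (2 * L) * ‖f' xε‖ ^ 2 := by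
        calc f xstar ≤ f (xε + -((1 / L) • f' xε)) := hlow
          _ ≤ f xε + -(1 / L) * ‖f' xε‖ ^ 2 + L / 2 * ((1 / L) ^ 2 * ‖f' xε‖ ^ 2) := hub
          _ = f xε - 1 / (2 * L) * ‖f' xε‖ ^ 2 := by field_simp; ring
      linarith
    have h6 := mul_le_mul_of_nonneg_left key (by positivity : (0:ℝ) ≤ 2 * L)
    calc ‖f' xε‖ ^ 2 = 2 * L * (1 / (2 * L) * ‖f' xε‖ ^ 2) := by field_simp
      _ ≤ 2 * L * ε := h6
  -- combine
  have hs0 : 0 ≤ Real.sqrt (L / μ) := Real.sqrt_nonneg _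
  have hs2 : Real.sqrt (L / μ) ^ 2 = L / μ := Real.sq_sqrt (by positivity)
  have hcs : ⟪f' xε, xε - xstar⟫ ≤ ‖f' xε‖ * ‖xε - xstar‖ := real_inner_le_norm _ _
  refine hcs.trans ?_
  have hgn : 0 ≤ ‖f' xε‖ := norm_nonneg _
  have hdn : 0 ≤ ‖xε - xstar‖ := norm_nonneg _
  have hd2 : ‖xε - xstar‖ ^ 2 ≤ 2 * ε / μ := by
    rw [le_div_iff₀ hμ]
    nlinarith [hdist]
  have hsq : (‖f' xε‖ * ‖xε - xstar‖) ^ 2 ≤ (2 * ε * Real.sqrt (L / μ)) ^ 2 := by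
    have h1 : ‖f' xε‖ ^ 2 * ‖xε - xstar‖ ^ 2 ≤ (2 * L * ε) * (2 * ε / μ) := by
      nlinarith [sq_nonneg ‖xε - xstar‖, sq_nonneg ‖f' xε‖, hε, hL.le, hgsq, hd2]
    calc (‖f' xε‖ * ‖xε - xstar‖) ^ 2 = ‖f' xε‖ ^ 2 * ‖xε - xstar‖ ^ 2 := by ring
      _ ≤ (2 * L * ε) * (2 * ε / μ) := h1
      _ = (2 * ε * Real.sqrt (L / μ)) ^ 2 := by
          rw [mul_pow, mul_pow, hs2]; field_simp
  have hrhs : 0 ≤ 2 * ε * Real.sqrt (L / μ) := by positivity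
  exact (pow_le_pow_iff_left₀ (mul_nonneg hgn hdn) hrhs two_ne_zero).mp hsq
end

section
/- (Exercise 3.3: inexact proximal step gives a (δ, L)-model of the Moreau envelope.) Let Q ⊆ H be a nonempty convex set, φ : H → ℝ convex on Q, L > 0, δ ≥ 0, and set Ψ(y, x) = φ(y) + (L/2)‖y − x‖². Fix x ∈ H and suppose ŷ ∈ Q satisfies Ψ(ŷ, x) − Ψ(y, x) + (L/2)‖y − ŷ‖² ≤ δ for all y ∈ Q. Then for every z ∈ H: (i) for every y ∈ Q, φ(y) + (L/2)‖y − z‖² ≥ [ φ(ŷ) + (L/2)‖ŷ − x‖² − δ ] + ⟨L·(x − ŷ), z − x⟩; and (ii) φ(ŷ) + (L/2)‖ŷ − z‖² = [ φ(ŷ) + (L/2)‖ŷ − x‖² ] + ⟨L·(x − ŷ), z − x⟩ + (L/2)‖z − x‖². Consequently, the pair f_δ(x) = φ(ŷ) + (L/2)‖ŷ − x‖² − δ, ψ(z, x) = ⟨L·(x − ŷ), z − x⟩ is a (δ, L)-model of the Moreau envelope f(z) = inf_{y ∈ Q}( φ(y) + (L/2)‖y − z‖² ): 0 ≤ f(z)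 − (f_δ(x) + ψ(z, x)) ≤ (L/2)‖z − x‖² + δ for all z ∈ H. -/
open RealInnerProductSpace

private lemma shift_id {H : Type*} [NormedAddCommGroup H] [InnerProductSpace ℝ H]
    (L : ℝ) (a x z : H) :
    (L / 2) * ‖a - z‖ ^ 2 =
      (L / 2) * ‖a - x‖ ^ 2 + ⟪L • (x - a), z - x⟫ + (L / 2) * ‖z - x‖ ^ 2 := by
  have h : a - z = (a - x) - (z - x) := by abel
  rw [h, norm_sub_sq_real, real_inner_smul_left,
    show x - a = -(a - x) by abel, inner_neg_left]
  ring

/-- Exercise 3.3: an inexact proximal step ŷ gives a (δ, L)-model of the Moreau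
envelope f(z) = inf_{y ∈ Q}(φ(y) + (L/2)‖y − z‖²): parts (i), (ii), and the
consequent model inequalities. -/
theorem inexact_prox_gives_model_of_moreau
    {H : Type*} [NormedAddCommGroup H] [InnerProductSpace ℝ H] [CompleteSpace H]
    (Q : Set H) (hQne : Q.Nonempty) (hQconv : Convex ℝ Q)
    (φ : H → ℝ) (hφ : ConvexOn ℝ Q φ)
    (L δ : ℝ) (hL : 0 < L) (hδ : 0 ≤ δ)
    (x yh : H) (hyh : yh ∈ Q)
    (hinexact : ∀ y ∈ Q,
      (φ yh + (L / 2) * ‖yh - x‖ ^ 2) - (φ y + (L / 2) * ‖y - x‖ ^ 2)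
        + (L / 2) * ‖y - yh‖ ^ 2 ≤ δ) :
    (∀ z : H, ∀ y ∈ Q,
      (φ yh + (L / 2) * ‖yh - x‖ ^ 2 - δ) + ⟪L • (x - yh), z - x⟫ ≤
        φ y + (L / 2) * ‖y - z‖ ^ 2) ∧
    (∀ z : H,
      φ yh + (L / 2) * ‖yh - z‖ ^ 2 =
        (φ yh + (L / 2) * ‖yh - x‖ ^ 2) + ⟪L • (x - yh), z - x⟫
          + (L / 2) * ‖z - x‖ ^ 2) ∧
    (∀ z : H,
      0 ≤ sInf ((fun y : H => φ y + (L / 2) * ‖y - z‖ ^ 2) '' Q) -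
          ((φ yh + (L / 2) * ‖yh - x‖ ^ 2 - δ) + ⟪L • (x - yh), z - x⟫) ∧
      sInf ((fun y : H => φ y + (L / 2) * ‖y - z‖ ^ 2) '' Q) -
          ((φ yh + (L / 2) * ‖yh - x‖ ^ 2 - δ) + ⟪L • (x - yh), z - x⟫) ≤
        (L / 2) * ‖z - x‖ ^ 2 + δ) := by
  have parti : ∀ z : H, ∀ y ∈ Q,
      (φ yh + (L / 2) * ‖yh - x‖ ^ 2 - δ) + ⟪L • (x - yh), z - x⟫ ≤
        φ y + (L / 2) * ‖y - z‖ ^ 2 := by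
    intro z y hy
    have h1 := hinexact y hy
    have hy2 := shift_id L y x z
    have hsq : (0:ℝ) ≤ (L / 2) * ‖(y - yh) - (z - x)‖ ^ 2 := by positivity
    rw [norm_sub_sq_real] at hsq
    have hab : ⟪y - yh, z - x⟫ = ⟪x - yh, z - x⟫ - ⟪x - y, z - x⟫ := by
      rw [← inner_sub_left]; congr 1; abel
    rw [hab] at hsq
    rw [hy2, real_inner_smul_left, real_inner_smul_left]
    nlinarith [hsq, h1]
  have partii : ∀ z : H,
      φ yh + (L / 2) * ‖yh - z‖ ^ 2 =
        (φ yh + (L / 2) * ‖yh - x‖ ^ 2) + ⟪L • (x - yh), z - x⟫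
          + (L / 2) * ‖z - x‖ ^ 2 := by
    intro z
    have := shift_id L yh x z
    linarith
  refine ⟨parti, partii, fun z => ?_⟩
  set S := (fun y : H => φ y + (L / 2) * ‖y - z‖ ^ 2) '' Q with hS
  have hne : S.Nonempty := hQne.image _
  have hlb : ∀ s ∈ S, (φ yh + (L / 2) * ‖yh - x‖ ^ 2 - δ) + ⟪L • (x - yh), z - x⟫ ≤ s := by
    rintro s ⟨y, hy, rfl⟩
    exact parti z y hy
  constructor
  · have := le_csInf hne hlb
    linarith
  · have hmem : φ yh + (L / 2) * ‖yh - z‖ ^ 2 ∈ S := ⟨yh, hyh, rfl⟩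
    have hle := csInf_le ⟨_, hlb⟩ hmem
    have := partii z
    linarith
end

section
/- (Exercise 4.3, part 1: strong convexity of the primal makes the dual gradient Lipschitz.) Let H₁, H₂ be real Hilbert spaces, Q̃ ⊆ H₂ a convex set, μ > 0, and let φ : H₂ → ℝ be μ-strongly convex on Q̃. Let A : H₂ → H₁ be a continuous linear map and b ∈ H₁. For i = 1, 2 let xᵢ ∈ H₁ and let yᵢ ∈ Q̃ be a maximizer over Q̃ of the function y ↦ ⟨xᵢ, b − Ay⟩ − φ(y). Then ‖y₁ − y₂‖ ≤ (‖A‖/μ)·‖x₁ − x₂‖ and ‖Ay₁ − Ay₂‖ ≤ (‖A‖²/μ)·‖x₁ − x₂‖. (Since ∇f(x) = b − A y(x) is the gradient of the dual function f(x) = max_{y ∈ Q̃}( ⟨x, b − Ay⟩ − φ(y) ), this says ∇f is Lipschitz with constant L = ‖A‖²/μ.) -/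
open RealInnerProductSpace

lemma strong_max_key
    {H₁ : Type*} [NormedAddCommGroup H₁] [InnerProductSpace ℝ H₁]
    {H₂ : Type*} [NormedAddCommGroup H₂] [InnerProductSpace ℝ H₂]
    (Qt : Set H₂) (hQt : Convex ℝ Qt)
    (μ : ℝ) (hμ : 0 < μ)
    (φ : H₂ → ℝ) (hφ : ConvexOn ℝ Qt (fun y : H₂ => φ y - (μ / 2) * ‖y‖ ^ 2))
    (A : H₂ →L[ℝ] H₁) (b : H₁) (x : H₁) (ys : H₂) (hys : ys ∈ Qt)
    (hmax : ∀ y ∈ Qt, ⟪x, b - A y⟫ - φ y ≤ ⟪x, b - A ys⟫ - φ ys)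
    (y : H₂) (hy : y ∈ Qt) :
    ⟪x, b - A y⟫ - φ y ≤ ⟪x, b - A ys⟫ - φ ys - (μ / 2) * ‖y - ys‖ ^ 2 := by
  set c : H₂ → ℝ := fun z => (φ z - (μ / 2) * ‖z‖ ^ 2) + ⟪x, A z⟫ with hc
  have hlin : ConvexOn ℝ Qt (fun z : H₂ => ⟪x, A z⟫) := by
    refine ⟨hQt, ?_⟩
    intro p hp q hq a b' ha hb hab
    simp [map_add, map_smul, inner_add_right, inner_smul_right]
  have hcconv : ConvexOn ℝ Qt c := hφ.add hlin
  set v : H₂ := y - ys with hv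
  clear_value c v
  have key : c ys - c y ≤ μ * ⟪ys, v⟫ := by
    by_cases hv0 : v = 0
    · have : y = ys := by rwa [hv, sub_eq_zero] at hv0
      simp [this, hv0]
    · refine le_of_forall_pos_le_add ?_
      intro ε hε
      have hnv : 0 < ‖v‖ ^ 2 := by
        have : 0 < ‖v‖ := norm_pos_iff.mpr hv0
        positivity
      set t : ℝ := min 1 (2 * ε / (μ * ‖v‖ ^ 2)) with ht
      have ht0 : 0 < t := lt_min one_pos (div_pos (by linarith) (mul_pos hμ hnv))
      have ht1 : t ≤ 1 := min_le_left _ _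
      have hmem : ys + t • v ∈ Qt := by
        have := hQt hys hy (by linarith : (0:ℝ) ≤ 1 - t) ht0.le (by ring)
        have he : (1 - t) • ys + t • y = ys + t • v := by rw [hv]; module
        rwa [he] at this
      have hconv := hcconv.2 hys hy (by linarith : (0:ℝ) ≤ 1 - t) ht0.le
        (by ring : (1 - t) + t = 1)
      have he : (1 - t) • ys + t • y = ys + t • v := by rw [hv]; module
      rw [he, smul_eq_mul, smul_eq_mul] at hconv
      have hm := hmax _ hmem
      have e1 : ∀ z : H₂, ⟪x, b - A z⟫ - φ z = ⟪x, b⟫ - c z - (μ/2) * ‖z‖^2 := by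
        intro z; simp [hc, inner_sub_right]; ring
      rw [e1, e1] at hm
      have hnorm : ‖ys + t • v‖^2 = ‖ys‖^2 + 2 * (t * ⟪ys, v⟫) + t^2 * ‖v‖^2 := by
        rw [norm_add_sq_real, real_inner_smul_right, norm_smul]
        rw [Real.norm_eq_abs, abs_of_pos ht0]
        ring
      rw [hnorm] at hm
      have h2 : t ≤ 2 * ε / (μ * ‖v‖ ^ 2) := min_le_right _ _
      clear_value t
      have step' : t * (c ys - c y) ≤ t * (μ * ⟪ys, v⟫ + (μ/2) * t * ‖v‖^2) := by
        nlinarith [hconv, hm]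
      have hdiv : c ys - c y ≤ μ * ⟪ys, v⟫ + (μ/2) * t * ‖v‖^2 :=
        (mul_le_mul_iff_right₀ ht0).mp step'
      have htb : (μ/2) * t * ‖v‖^2 ≤ ε := by
        rw [le_div_iff₀ (mul_pos hμ hnv)] at h2
        nlinarith
      linarith
  have e1 : ∀ z : H₂, ⟪x, b - A z⟫ - φ z = ⟪x, b⟫ - c z - (μ/2) * ‖z‖^2 := by
    intro z; simp [hc, inner_sub_right]; ring
  rw [e1, e1]
  have hiv : ⟪ys, v⟫ = ⟪ys, y⟫ - ‖ys‖^2 := by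
    rw [hv, inner_sub_right, real_inner_self_eq_norm_sq]
  have hns : ‖v‖^2 = ‖y‖^2 - 2 * ⟪ys, v⟫ - ‖ys‖^2 := by
    rw [hiv, hv, norm_sub_sq_real, real_inner_comm]; ring
  rw [hns]
  nlinarith [key]

/-- Exercise 4.3, part 1: strong convexity of the primal objective makes the dual
gradient Lipschitz. If yᵢ maximizes y ↦ ⟪xᵢ, b − Ay⟫ − φ(y) over the convex set Q̃
and φ is μ-strongly convex on Q̃, then ‖y₁ − y₂‖ ≤ (‖A‖/μ)‖x₁ − x₂‖ and
‖Ay₁ − Ay₂‖ ≤ (‖A‖²/μ)‖x₁ − x₂‖. -/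
theorem dual_gradient_lipschitz
    {H₁ : Type*} [NormedAddCommGroup H₁] [InnerProductSpace ℝ H₁] [CompleteSpace H₁]
    {H₂ : Type*} [NormedAddCommGroup H₂] [InnerProductSpace ℝ H₂] [CompleteSpace H₂]
    (Qt : Set H₂) (hQt : Convex ℝ Qt)
    (μ : ℝ) (hμ : 0 < μ)
    (φ : H₂ → ℝ) (hφ : ConvexOn ℝ Qt (fun y : H₂ => φ y - (μ / 2) * ‖y‖ ^ 2))
    (A : H₂ →L[ℝ] H₁) (b : H₁)
    (x₁ x₂ : H₁) (y₁ y₂ : H₂) (hy₁ : y₁ ∈ Qt) (hy₂ : y₂ ∈ Qt)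
    (hmax₁ : ∀ y ∈ Qt, ⟪x₁, b - A y⟫ - φ y ≤ ⟪x₁, b - A y₁⟫ - φ y₁)
    (hmax₂ : ∀ y ∈ Qt, ⟪x₂, b - A y⟫ - φ y ≤ ⟪x₂, b - A y₂⟫ - φ y₂) :
    ‖y₁ - y₂‖ ≤ (‖A‖ / μ) * ‖x₁ - x₂‖ ∧
    ‖A y₁ - A y₂‖ ≤ (‖A‖ ^ 2 / μ) * ‖x₁ - x₂‖ := by
  have h1 := strong_max_key Qt hQt μ hμ φ hφ A b x₁ y₁ hy₁ hmax₁ y₂ hy₂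
  have h2 := strong_max_key Qt hQt μ hμ φ hφ A b x₂ y₂ hy₂ hmax₂ y₁ hy₁
  set d := ‖y₁ - y₂‖ with hd
  have hd21 : ‖y₂ - y₁‖ = d := by rw [hd, norm_sub_rev]
  rw [hd21] at h1
  -- sum up
  have hsum : μ * d^2 ≤ ⟪x₁ - x₂, A y₂ - A y₁⟫ := by
    simp only [inner_sub_right, inner_sub_left] at h1 h2 ⊢
    linarith
  have hAle : ‖A y₂ - A y₁‖ ≤ ‖A‖ * d := by
    rw [← map_sub]
    calc ‖A (y₂ - y₁)‖ ≤ ‖A‖ * ‖y₂ - y₁‖ := A.le_opNorm _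
      _ = ‖A‖ * d := by rw [hd21]
  have hcs : ⟪x₁ - x₂, A y₂ - A y₁⟫ ≤ ‖x₁ - x₂‖ * (‖A‖ * d) :=
    le_trans (real_inner_le_norm _ _) (by
      have := hAle
      nlinarith [norm_nonneg (x₁ - x₂)])
  have hmain : μ * d^2 ≤ ‖x₁ - x₂‖ * (‖A‖ * d) := le_trans hsum hcs
  have hdle : d ≤ (‖A‖ / μ) * ‖x₁ - x₂‖ := by
    rcases eq_or_lt_of_le (norm_nonneg (y₁ - y₂)) with h0 | h0
    · rw [← hd] at h0
      rw [← h0]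
      positivity
    · rw [← hd] at h0
      have : μ * d ≤ ‖x₁ - x₂‖ * ‖A‖ := by nlinarith
      rw [div_mul_eq_mul_div, le_div_iff₀ hμ]
      nlinarith
  refine ⟨hdle, ?_⟩
  have : ‖A y₁ - A y₂‖ ≤ ‖A‖ * d := by rwa [norm_sub_rev]
  calc ‖A y₁ - A y₂‖ ≤ ‖A‖ * d := this
    _ ≤ ‖A‖ * ((‖A‖ / μ) * ‖x₁ - x₂‖) := by
        exact mul_le_mul_of_nonneg_left hdle (norm_nonneg _)
    _ = (‖A‖ ^ 2 / μ) * ‖x₁ - x₂‖ := by ring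
end

section
/- (Exercise 4.4: Tikhonov regularization bounds.) Let f : H → ℝ be Fréchet differentiable with L-Lipschitz gradient, L > 0, let μ > 0, and define the regularized function f^μ(x) = f(x) + (μ/2)‖x‖². (i) If x*^μ is a global minimizer of f^μ, then for every x ∈ H, μ·⟨x, ∇f(x)⟩ ≤ (L + μ)·( f^μ(x) − f^μ(x*^μ) ). (ii) If, in addition, f is convex and x* is a global minimizer of f, then ‖x*^μ‖² ≤ (2/μ)·( f(0) − f(x*) ). -/
open RealInnerProductSpace InnerProductSpace

/-- Descent lemma: a function with `K`-Lipschitz gradient satisfies the quadratic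
upper bound `g y ≤ g x + ⟪∇g x, y - x⟫ + (K/2)‖y - x‖²`. -/
lemma descent_lemma_aux
    {H : Type*} [NormedAddCommGroup H] [InnerProductSpace ℝ H] [CompleteSpace H]
    (g : H → ℝ) (g' : H → H) (hg : ∀ x, HasGradientAt g (g' x) x)
    (K : ℝ) (hK : 0 ≤ K)
    (hlip : ∀ x y : H, ‖g' y - g' x‖ ≤ K * ‖y - x‖) (x y : H) :
    g y ≤ g x + ⟪g' x, y - x⟫ + K / 2 * ‖y - x‖ ^ 2 := by
  set v := y - x with hv
  set φ : ℝ → ℝ := fun t => g (x + t • v) with hφdef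
  have hφ : ∀ t : ℝ, HasDerivAt φ ⟪g' (x + t • v), v⟫ t := by
    intro t
    have hline : HasDerivAt (fun t : ℝ => x + t • v) v t := by
      simpa using ((hasDerivAt_id t).smul_const v).const_add x
    have hgf : HasFDerivAt g (toDual ℝ H (g' (x + t • v))) (x + t • v) := hg _
    exact (hgf.comp_hasDerivAt t hline).congr_deriv (by simp)
  have hcontg' : Continuous g' := by
    have : LipschitzWith (Real.toNNReal K) g' := by
      apply LipschitzWith.of_dist_le_mul
      intro a b
      simpa [dist_eq_norm, Real.coe_toNNReal K hK] using hlip b a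
    exact this.continuous
  have hcont : Continuous fun t : ℝ => ⟪g' (x + t • v), v⟫ :=
    (hcontg'.comp (by continuity)).inner continuous_const
  have key : ∫ t in (0:ℝ)..1, ⟪g' (x + t • v), v⟫ = φ 1 - φ 0 :=
    intervalIntegral.integral_eq_sub_of_hasDerivAt (fun t _ => hφ t)
      (hcont.intervalIntegrable 0 1)
  have hbound : ∀ t ∈ Set.Icc (0:ℝ) 1,
      ⟪g' (x + t • v), v⟫ ≤ ⟪g' x, v⟫ + K * ‖v‖ ^ 2 * t := by
    intro t ht
    have h1 : ⟪g' (x + t • v) - g' x, v⟫ ≤ ‖g' (x + t • v) - g' x‖ * ‖v‖ :=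
      real_inner_le_norm _ _
    have h2 : ‖g' (x + t • v) - g' x‖ ≤ K * (t * ‖v‖) := by
      have := hlip x (x + t • v)
      simpa [norm_smul, abs_of_nonneg ht.1] using this
    have h3 : ⟪g' (x + t • v), v⟫ - ⟪g' x, v⟫ ≤ K * (t * ‖v‖) * ‖v‖ := by
      rw [← inner_sub_left]
      exact h1.trans (by nlinarith [norm_nonneg v, norm_nonneg (g' (x + t • v) - g' x)])
    nlinarith [norm_nonneg v]
  have hmono : ∫ t in (0:ℝ)..1, ⟪g' (x + t • v), v⟫ ≤
      ∫ t in (0:ℝ)..1, (⟪g' x, v⟫ + K * ‖v‖ ^ 2 * t) := by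
    apply intervalIntegral.integral_mono_on (by norm_num)
      (hcont.intervalIntegrable 0 1)
      ((continuous_const.add (continuous_const.mul continuous_id)).intervalIntegrable 0 1)
    exact hbound
  have hrhs : ∫ t in (0:ℝ)..1, (⟪g' x, v⟫ + K * ‖v‖ ^ 2 * t)
      = ⟪g' x, v⟫ + K * ‖v‖ ^ 2 / 2 := by
    rw [intervalIntegral.integral_add intervalIntegrable_const
      ((intervalIntegral.intervalIntegrable_id).const_mul _)]
    rw [intervalIntegral.integral_const_mul, integral_id, intervalIntegral.integral_const]
    simp
    ring
  have hφ1 : φ 1 = g y := by simp [hφdef, hv]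
  have hφ0 : φ 0 = g x := by simp [hφdef]
  rw [key, hrhs, hφ1, hφ0] at hmono
  linarith

/-- Exercise 4.4: Tikhonov regularization bounds. With f^μ(x) = f(x) + (μ/2)‖x‖² and
x*^μ a global minimizer of f^μ:
(i) μ⟪x, ∇f(x)⟫ ≤ (L + μ)(f^μ(x) − f^μ(x*^μ)) for all x;
(ii) if moreover f is convex with global minimizer x*, then ‖x*^μ‖² ≤ (2/μ)(f(0) − f(x*)). -/
theorem tikhonov_regularization_bounds
    {H : Type*} [NormedAddCommGroup H] [InnerProductSpace ℝ H] [CompleteSpace H]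
    (f : H → ℝ) (f' : H → H) (hf : ∀ x, HasGradientAt f (f' x) x)
    (L : ℝ) (hL : 0 < L)
    (hlip : ∀ x y : H, ‖f' y - f' x‖ ≤ L * ‖y - x‖)
    (μ : ℝ) (hμ : 0 < μ)
    (xμ : H)
    (hxμ : ∀ y : H, f xμ + (μ / 2) * ‖xμ‖ ^ 2 ≤ f y + (μ / 2) * ‖y‖ ^ 2) :
    (∀ x : H, μ * ⟪x, f' x⟫ ≤
      (L + μ) * ((f x + (μ / 2) * ‖x‖ ^ 2) - (f xμ + (μ / 2) * ‖xμ‖ ^ 2))) ∧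
    (ConvexOn ℝ Set.univ f → ∀ xstar : H, (∀ y : H, f xstar ≤ f y) →
      ‖xμ‖ ^ 2 ≤ (2 / μ) * (f 0 - f xstar)) := by
  have hLμ : (0:ℝ) < L + μ := by linarith
  set F : H → ℝ := fun z => f z + (μ / 2) * ‖z‖ ^ 2 with hFdef
  set F' : H → H := fun z => f' z + μ • z with hF'def
  have hF : ∀ z : H, HasGradientAt F (F' z) z := by
    intro z
    have h1 : HasFDerivAt f (toDual ℝ H (f' z)) z := hf z
    have h2 := (hasFDerivAt_id z).inner ℝ (hasFDerivAt_id z)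
    simp only [real_inner_self_eq_norm_sq] at h2
    have h3 := h1.add (h2.const_mul (μ / 2))
    rw [hasGradientAt_iff_hasFDerivAt]
    refine h3.congr_fderiv ?_
    ext v
    simp [hF'def, inner_add_left, inner_add_right, real_inner_smul_left,
      real_inner_smul_right, real_inner_comm]
    ring
  have hlipF : ∀ a b : H, ‖F' b - F' a‖ ≤ (L + μ) * ‖b - a‖ := by
    intro a b
    have : F' b - F' a = (f' b - f' a) + μ • (b - a) := by
      simp [hF'def, smul_sub]
      abel
    rw [this]
    calc ‖(f' b - f' a) + μ • (b - a)‖ ≤ ‖f' b - f' a‖ + ‖μ • (b - a)‖ := norm_add_le _ _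
      _ ≤ L * ‖b - a‖ + μ * ‖b - a‖ := by
          gcongr
          · exact hlip a b
          · rw [norm_smul, Real.norm_eq_abs, abs_of_pos hμ]
      _ = (L + μ) * ‖b - a‖ := by ring
  constructor
  · intro x
    set gx := F' x with hgx
    set y := x - ((L + μ)⁻¹) • gx with hy
    have hdesc := descent_lemma_aux F F' hF (L + μ) hLμ.le hlipF x y
    have hyx : y - x = -(((L + μ)⁻¹) • gx) := by rw [hy]; abel
    have hin : ⟪gx, y - x⟫ = -((L + μ)⁻¹ * ‖gx‖ ^ 2) := by
      rw [hyx]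
      simp [real_inner_smul_right, real_inner_self_eq_norm_sq]
    have hnorm : ‖y - x‖ ^ 2 = ((L + μ)⁻¹) ^ 2 * ‖gx‖ ^ 2 := by
      rw [hyx, norm_neg, norm_smul, Real.norm_eq_abs, abs_of_pos (inv_pos.mpr hLμ)]
      ring
    have hmin := hxμ y
    have hFy : F xμ ≤ F y := hmin
    have hkey : ‖gx‖ ^ 2 / 2 ≤ (L + μ) * (F x - F xμ) := by
      rw [hin, hnorm] at hdesc
      have h5 : F xμ ≤ F x - (L + μ)⁻¹ * ‖gx‖ ^ 2 / 2 := by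
        refine hFy.trans (hdesc.trans_eq ?_)
        field_simp
        ring
      have := mul_le_mul_of_nonneg_left (by linarith : (L + μ)⁻¹ * ‖gx‖ ^ 2 / 2 ≤ F x - F xμ) hLμ.le
      calc ‖gx‖ ^ 2 / 2 = (L + μ) * ((L + μ)⁻¹ * ‖gx‖ ^ 2 / 2) := by
            field_simp
          _ ≤ (L + μ) * (F x - F xμ) := this
    have hfx : f' x = gx - μ • x := by simp [hgx, hF'def]
    have hinner : ⟪x, f' x⟫ = ⟪x, gx⟫ - μ * ‖x‖ ^ 2 := by
      rw [hfx, inner_sub_right, real_inner_smul_right, real_inner_self_eq_norm_sq]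
    have hcs : ⟪x, gx⟫ ≤ ‖x‖ * ‖gx‖ := real_inner_le_norm _ _
    have hgoal : μ * ⟪x, f' x⟫ ≤ ‖gx‖ ^ 2 / 2 := by
      rw [hinner]
      nlinarith [sq_nonneg (‖gx‖ - μ * ‖x‖), sq_nonneg (μ * ‖x‖),
        mul_le_mul_of_nonneg_left hcs hμ.le]
    exact hgoal.trans hkey
  · intro _ xstar hxstar
    have h1 := hxμ 0
    simp only [norm_zero] at h1
    have h2 := hxstar xμ
    rw [div_mul_eq_mul_div, le_div_iff₀ hμ]
    nlinarith
end

section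
/- (Inequality from Remark 5.1, used in the universal method for variational inequalities.) For all real numbers a > 0, b > 0, M > 0, δ > 0 and every ν ∈ [0,1]: M·a^ν·b ≤ M·(M/δ)^((1−ν)/(1+ν))·( a²/2 + b²/2 ) + δ. -/
/-- The inequality from Remark 5.1 used in the universal method for variational
inequalities: M·a^ν·b ≤ M·(M/δ)^((1−ν)/(1+ν))·(a²/2 + b²/2) + δ. -/
theorem universal_method_young_inequality
    (a b M δ : ℝ) (ha : 0 < a) (hb : 0 < b) (hM : 0 < M) (hδ : 0 < δ)
    (ν : ℝ) (hν0 : 0 ≤ ν) (hν1 : ν ≤ 1) :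
    M * a ^ ν * b ≤
      M * (M / δ) ^ ((1 - ν) / (1 + ν)) * (a ^ 2 / 2 + b ^ 2 / 2) + δ := by
  rcases eq_or_lt_of_le hν1 with hν | hν
  · -- ν = 1 : plain AM–GM
    subst hν
    simp only [sub_self, zero_div, Real.rpow_zero, mul_one, Real.rpow_one]
    nlinarith [sq_nonneg (a - b)]
  · -- ν < 1
    set e : ℝ := (1 - ν) / (1 + ν) with he
    have h1ν : (0:ℝ) < 1 + ν := by linarith
    have h1ν' : (0:ℝ) < 1 - ν := by linarith
    have he0 : 0 ≤ e := by positivity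
    set r : ℝ := M * (1 - ν) / (2 * δ) with hrdef
    have hr : 0 < r := by positivity
    set α : ℝ := M * r ^ e with hα
    have hα0 : 0 < α := by positivity
    -- key identity: α^((1+ν)/2) * (M/r)^((1-ν)/2) = M
    have key : α ^ ((1 + ν) / 2) * (M / r) ^ ((1 - ν) / 2) = M := by
      have hL : 0 < α ^ ((1 + ν) / 2) * (M / r) ^ ((1 - ν) / 2) := by positivity
      have hlog : Real.log (α ^ ((1 + ν) / 2) * (M / r) ^ ((1 - ν) / 2))
          = Real.log M := by
        rw [Real.log_mul (by positivity) (by positivity), Real.log_rpow hα0,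
          Real.log_rpow (by positivity), hα,
          Real.log_mul hM.ne' (by positivity), Real.log_rpow hr,
          Real.log_div hM.ne' hr.ne', he]
        field_simp
        ring
      rw [← Real.exp_log hL, hlog, Real.exp_log hM]
    -- geometric mean computation
    have ha2 : (a ^ 2 : ℝ) ^ (ν / 2) = a ^ ν := by
      rw [← Real.rpow_natCast a 2, ← Real.rpow_mul ha.le]
      congr 1
      ring
    have hb2 : (b ^ 2 : ℝ) ^ ((1:ℝ) / 2) = b := by
      rw [← Real.rpow_natCast b 2, ← Real.rpow_mul hb.le]
      norm_num
    have hGM : (α * a ^ 2) ^ (ν / 2) * (α * b ^ 2) ^ ((1:ℝ) / 2)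
        * (M / r) ^ ((1 - ν) / 2) = M * a ^ ν * b := by
      rw [Real.mul_rpow hα0.le (by positivity), Real.mul_rpow hα0.le (by positivity),
        ha2, hb2]
      calc α ^ (ν / 2) * a ^ ν * (α ^ ((1:ℝ) / 2) * b) * (M / r) ^ ((1 - ν) / 2)
          = (α ^ (ν / 2) * α ^ ((1:ℝ) / 2) * (M / r) ^ ((1 - ν) / 2)) * a ^ ν * b := by
            ring
        _ = (α ^ ((1 + ν) / 2) * (M / r) ^ ((1 - ν) / 2)) * a ^ ν * b := by
            rw [← Real.rpow_add hα0]
            ring_nf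
        _ = M * a ^ ν * b := by rw [key]
    -- weighted AM-GM
    have hAMGM := Real.geom_mean_le_arith_mean3_weighted
      (w₁ := ν / 2) (w₂ := (1:ℝ) / 2) (w₃ := (1 - ν) / 2)
      (p₁ := α * a ^ 2) (p₂ := α * b ^ 2) (p₃ := M / r)
      (by positivity) (by norm_num) (by positivity)
      (by positivity) (by positivity) (by positivity) (by ring)
    rw [hGM] at hAMGM
    -- bound the arithmetic mean by the RHS
    have hαle : α ≤ M * (M / δ) ^ e := by
      rw [hα]
      have : r ≤ M / δ := by
        rw [hrdef, div_le_div_iff₀ (by positivity) hδ]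
        nlinarith [mul_pos hM hδ]
      exact mul_le_mul_of_nonneg_left
        (Real.rpow_le_rpow hr.le this he0) hM.le
    have hlast : (1 - ν) / 2 * (M / r) = δ := by
      rw [hrdef]
      field_simp
    have hK0 : (0:ℝ) ≤ (M / δ) ^ e := by positivity
    calc M * a ^ ν * b
        ≤ ν / 2 * (α * a ^ 2) + 1 / 2 * (α * b ^ 2) + (1 - ν) / 2 * (M / r) :=
          hAMGM
      _ ≤ 1 / 2 * (M * (M / δ) ^ e * a ^ 2) + 1 / 2 * (M * (M / δ) ^ e * b ^ 2)
          + δ := by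
          rw [hlast]
          have h1 : ν / 2 * (α * a ^ 2) ≤ 1 / 2 * (M * (M / δ) ^ e * a ^ 2) := by
            have : α * a ^ 2 ≤ M * (M / δ) ^ e * a ^ 2 :=
              mul_le_mul_of_nonneg_right hαle (by positivity)
            nlinarith [mul_pos hα0 (pow_pos ha 2)]
          have h2 : 1 / 2 * (α * b ^ 2) ≤ 1 / 2 * (M * (M / δ) ^ e * b ^ 2) := by
            have : α * b ^ 2 ≤ M * (M / δ) ^ e * b ^ 2 :=
              mul_le_mul_of_nonneg_right hαle (by positivity)
            linarith
          linarith
      _ = M * (M / δ) ^ e * (a ^ 2 / 2 + b ^ 2 / 2) + δ := by ring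
end
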